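/- arXiv:1512.01249 — 10 statements merged into one kernel-verified Lean document; each statement's English description precedes it below -/
import Mathlib

section
/- The conditional belief function obtained from the conditional basic belief assignment equals the Dempster-conditioning formula: if m is a basic belief assignment with belief function Bel, H ⊆ Ω with Bel(Hᶜ) ≠ 1, and m_H(A) := (Σ_{B : B∩H = A} m(B)) / (1 − Σ_{B : B∩H = ∅} m(B)) for A ≠ ∅ (with m_H(∅)=0), then Bel_H(A) := Σ_{B ⊆ A} m_H(B) = (Bel(A ∪ Hᶜ) − Bel(Hᶜ)) / (1 − Bel(Hᶜ)) for all A ⊆ Ω. -/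
open Finset

theorem conditional_belief_formula {Ω : Type*} [Fintype Ω] [DecidableEq Ω]
    (m : Finset Ω → ℝ) (hm0 : m ∅ = 0) (hmnn : ∀ C, 0 ≤ m C)
    (hmsum : ∑ C : Finset Ω, m C = 1)
    (Bel : Finset Ω → ℝ) (hBel : ∀ A, Bel A = ∑ C ∈ A.powerset, m C)
    (H : Finset Ω) (hH : Bel Hᶜ ≠ 1)
    (mH : Finset Ω → ℝ) (hmH0 : mH ∅ = 0)
    (hmH : ∀ A : Finset Ω, A ≠ ∅ →
      mH A = (∑ B ∈ univ.filter (fun B : Finset Ω => B ∩ H = A), m B) /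
        (1 - ∑ B ∈ univ.filter (fun B : Finset Ω => B ∩ H = ∅), m B)) :
    ∀ A : Finset Ω,
      ∑ B ∈ A.powerset, mH B = (Bel (A ∪ Hᶜ) - Bel Hᶜ) / (1 - Bel Hᶜ) := by
  intro A
  have hBelHc : Bel Hᶜ = ∑ B ∈ univ.filter (fun B : Finset Ω => B ∩ H = ∅), m B := by
    rw [hBel]
    apply Finset.sum_congr _ (fun _ _ => rfl)
    ext C
    simp only [mem_powerset, mem_filter, mem_univ, true_and, Finset.subset_iff,
      Finset.eq_empty_iff_forall_notMem, Finset.mem_inter, Finset.mem_compl]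
    tauto
  -- LHS: sum over nonempty subsets
  have h1 : ∑ B ∈ A.powerset, mH B
      = ∑ B ∈ A.powerset.filter (fun B => B ≠ ∅), mH B := by
    symm
    apply Finset.sum_filter_of_ne
    intro B _ hB
    intro hBe
    exact hB (by rw [hBe, hmH0])
  have h2 : ∑ B ∈ A.powerset.filter (fun B => B ≠ ∅), mH B
      = (∑ C ∈ univ.filter (fun C : Finset Ω => C ∩ H ∈ A.powerset.filter (fun B => B ≠ ∅)),
          m C) / (1 - Bel Hᶜ) := by
    rw [← Finset.sum_fiberwise_eq_sum_filter univ (A.powerset.filter (fun B => B ≠ ∅))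
      (fun C => C ∩ H) m, Finset.sum_div]
    apply Finset.sum_congr rfl
    intro B hB
    rw [hmH B (by simp at hB; exact hB.2), ← hBelHc]
  -- RHS numerator
  have h3 : Bel (A ∪ Hᶜ) - Bel Hᶜ
      = ∑ C ∈ (A ∪ Hᶜ).powerset \ Hᶜ.powerset, m C := by
    rw [hBel, hBel, Finset.sum_sdiff_eq_sub (Finset.powerset_mono.mpr subset_union_right)]
  have h4 : (A ∪ Hᶜ).powerset \ Hᶜ.powerset
      = univ.filter (fun C : Finset Ω => C ∩ H ∈ A.powerset.filter (fun B => B ≠ ∅)) := by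
    ext C
    simp only [mem_sdiff, mem_powerset, mem_filter, mem_univ, true_and, Finset.subset_iff,
      Finset.eq_empty_iff_forall_notMem, Finset.mem_inter, Finset.mem_compl, Finset.mem_union,
      ne_eq, Finset.ext_iff, Finset.notMem_empty, iff_false, not_forall, not_and, not_not]
    constructor
    · rintro ⟨hsub, x, hxC, hxH⟩
      refine ⟨fun y ⟨hyC, hyH⟩ => ?_, x, hxC, hxH⟩
      rcases hsub hyC with h | h
      · exact h
      · exact absurd hyH h
    · rintro ⟨hsub, x, hxC, hxH⟩
      refine ⟨fun y hyC => ?_, x, hxC, hxH⟩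
      by_cases hyH : y ∈ H
      · exact Or.inl (hsub ⟨hyC, hyH⟩)
      · exact Or.inr hyH
  rw [h1, h2, h3, h4]
end

section
/- Law of total belief: let B_1,…,B_n be a partition of Ω such that Bel(B_i) > 0 for every i, and suppose every C with m(C) > 0 satisfies C ⊆ B_i for some i. Then Σ_{i=1}^n Bel(B_i) = 1 and Bel(A) = Σ_{i=1}^n Bel(B_i) · Bel_{B_i}(A) for all A ⊆ Ω. -/
open Finset

theorem law_of_total_belief {Ω : Type*} [Fintype Ω] [DecidableEq Ω]
    (m : Finset Ω → ℝ) (hm0 : m ∅ = 0) (hmnn : ∀ C, 0 ≤ m C)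
    (hmsum : ∑ C : Finset Ω, m C = 1)
    (Bel : Finset Ω → ℝ) (hBel : ∀ A, Bel A = ∑ C ∈ A.powerset, m C)
    (n : ℕ) (B : Fin n → Finset Ω)
    (hdisj : ∀ i j, i ≠ j → Disjoint (B i) (B j))
    (hcover : (⋃ i, (B i : Set Ω)) = Set.univ)
    (hpos : ∀ i, 0 < Bel (B i))
    (hsupp : ∀ C : Finset Ω, 0 < m C → ∃ i, C ⊆ B i) :
    (∑ i, Bel (B i) = 1) ∧
    ∀ A : Finset Ω,
      Bel A = ∑ i, Bel (B i) * ((Bel (A ∪ (B i)ᶜ) - Bel (B i)ᶜ) / (1 - Bel (B i)ᶜ)) := by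
  classical
  have hBel' : ∀ A : Finset Ω, Bel A = ∑ C : Finset Ω, if C ⊆ A then m C else 0 := by
    intro A
    rw [hBel, ← Finset.sum_filter]
    congr 1
    ext C
    simp [Finset.mem_powerset]
  have hne : ∀ C : Finset Ω, 0 < m C → C.Nonempty := by
    intro C h
    rcases C.eq_empty_or_nonempty with rfl | h'
    · rw [hm0] at h; exact absurd h (lt_irrefl 0)
    · exact h'
  have hsub : ∀ i j, i ≠ j → B i ⊆ (B j)ᶜ := by
    intro i j hij x hx
    rw [Finset.mem_compl]
    exact fun hx' => (Finset.disjoint_left.mp (hdisj i j hij)) hx hx'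
  have key1 : ∀ C : Finset Ω, (∑ i, if C ⊆ B i then m C else 0) = m C := by
    intro C
    rcases eq_or_lt_of_le (hmnn C) with h0 | h0
    · simp [← h0]
    · obtain ⟨i₀, hi₀⟩ := hsupp C h0
      obtain ⟨x, hx⟩ := hne C h0
      rw [Fintype.sum_eq_single i₀]
      · simp [hi₀]
      · intro j hj
        rw [if_neg]
        intro hsub'
        exact (Finset.mem_compl.mp (hsub i₀ j (Ne.symm hj) (hi₀ hx))) (hsub' hx)
  have part1 : ∑ i, Bel (B i) = 1 := by
    calc ∑ i, Bel (B i) = ∑ i, ∑ C : Finset Ω, if C ⊆ B i then m C else 0 := by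
          simp_rw [hBel']
      _ = ∑ C : Finset Ω, ∑ i, if C ⊆ B i then m C else 0 := Finset.sum_comm
      _ = ∑ C : Finset Ω, m C := by simp_rw [key1]
      _ = 1 := hmsum
  have hcomp : ∀ i, Bel (B i) + Bel (B i)ᶜ = 1 := by
    intro i
    rw [hBel', hBel', ← Finset.sum_add_distrib, ← hmsum]
    refine Finset.sum_congr rfl fun C _ => ?_
    rcases eq_or_lt_of_le (hmnn C) with h0 | h0
    · simp [← h0]
    · obtain ⟨j, hj⟩ := hsupp C h0
      obtain ⟨x, hx⟩ := hne C h0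
      by_cases hij : j = i
      · subst hij
        rw [if_pos hj, if_neg, add_zero]
        intro hs
        exact (Finset.mem_compl.mp (hs hx)) (hj hx)
      · have hcc : C ⊆ (B i)ᶜ := hj.trans (hsub j i hij)
        rw [if_neg, if_pos hcc, zero_add]
        intro hs
        exact (Finset.mem_compl.mp (hsub j i hij (hj hx))) (hs hx)
  refine ⟨part1, fun A => ?_⟩
  have key2 : ∀ C : Finset Ω,
      (∑ i, ((if C ⊆ A ∪ (B i)ᶜ then m C else 0) - (if C ⊆ (B i)ᶜ then m C else 0)))
        = if C ⊆ A then m C else 0 := by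
    intro C
    rcases eq_or_lt_of_le (hmnn C) with h0 | h0
    · simp [← h0]
    · obtain ⟨i₀, hi₀⟩ := hsupp C h0
      obtain ⟨x, hx⟩ := hne C h0
      rw [Fintype.sum_eq_single i₀]
      · have h2 : ¬ C ⊆ (B i₀)ᶜ := fun hs => (Finset.mem_compl.mp (hs hx)) (hi₀ hx)
        rw [if_neg h2, sub_zero]
        by_cases hA : C ⊆ A
        · rw [if_pos hA, if_pos (hA.trans Finset.subset_union_left)]
        · rw [if_neg hA, if_neg]
          intro hs
          obtain ⟨y, hy, hyA⟩ := Finset.not_subset.mp hA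
          rcases Finset.mem_union.mp (hs hy) with h | h
          · exact hyA h
          · exact (Finset.mem_compl.mp h) (hi₀ hy)
      · intro j hj
        have hcc : C ⊆ (B j)ᶜ := hi₀.trans (hsub i₀ j (Ne.symm hj))
        rw [if_pos hcc, if_pos (hcc.trans Finset.subset_union_right), sub_self]
  have hterm : ∀ i, Bel (B i) * ((Bel (A ∪ (B i)ᶜ) - Bel (B i)ᶜ) / (1 - Bel (B i)ᶜ))
      = Bel (A ∪ (B i)ᶜ) - Bel (B i)ᶜ := by
    intro i
    have h1 : 1 - Bel (B i)ᶜ = Bel (B i) := by linarith [hcomp i]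
    rw [h1, mul_comm, div_mul_cancel₀ _ (ne_of_gt (hpos i))]
  calc Bel A = ∑ C : Finset Ω, if C ⊆ A then m C else 0 := hBel' A
    _ = ∑ C : Finset Ω, ∑ i,
        ((if C ⊆ A ∪ (B i)ᶜ then m C else 0) - (if C ⊆ (B i)ᶜ then m C else 0)) := by
        simp_rw [key2]
    _ = ∑ i, ∑ C : Finset Ω,
        ((if C ⊆ A ∪ (B i)ᶜ then m C else 0) - (if C ⊆ (B i)ᶜ then m C else 0)) :=
        Finset.sum_comm
    _ = ∑ i, (Bel (A ∪ (B i)ᶜ) - Bel (B i)ᶜ) := by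
        simp_rw [Finset.sum_sub_distrib, ← hBel']
    _ = ∑ i, Bel (B i) * ((Bel (A ∪ (B i)ᶜ) - Bel (B i)ᶜ) / (1 - Bel (B i)ᶜ)) := by
        exact Finset.sum_congr rfl fun i _ => (hterm i).symm
end

section
/- If m is a basic belief assignment on Ω₁ × Ω₂ that concentrates on rectangles (m(C) > 0 implies C = X(C) × Y(C)), then for all A ⊆ Ω₁ and B ⊆ Ω₂: Bel((A × Ω₂) ∪ (Ω₁ × B)) = Bel(A × Ω₂) + Bel(Ω₁ × B) − Bel(A × B). -/
open Finset

theorem rectangles_give_modularity {Ω₁ Ω₂ : Type*} [Fintype Ω₁] [Fintype Ω₂]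
    [DecidableEq Ω₁] [DecidableEq Ω₂]
    (m : Finset (Ω₁ × Ω₂) → ℝ) (hm0 : m ∅ = 0) (hmnn : ∀ C, 0 ≤ m C)
    (hmsum : ∑ C : Finset (Ω₁ × Ω₂), m C = 1)
    (Bel : Finset (Ω₁ × Ω₂) → ℝ) (hBel : ∀ A, Bel A = ∑ C ∈ A.powerset, m C)
    (hrect : ∀ C : Finset (Ω₁ × Ω₂), 0 < m C → C = (C.image Prod.fst) ×ˢ (C.image Prod.snd)) :
    ∀ (A : Finset Ω₁) (B : Finset Ω₂),
      Bel ((A ×ˢ univ) ∪ (univ ×ˢ B)) = Bel (A ×ˢ univ) + Bel (univ ×ˢ B) - Bel (A ×ˢ B) := by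
  intro A B
  have key : ∀ X : Finset (Ω₁ × Ω₂),
      Bel X = ∑ C : Finset (Ω₁ × Ω₂), if C ⊆ X then m C else 0 := by
    intro X
    rw [hBel, ← Finset.sum_filter]
    congr 1
    ext C
    simp [Finset.mem_powerset]
  rw [key, key, key, key, ← Finset.sum_add_distrib, ← Finset.sum_sub_distrib]
  refine Finset.sum_congr rfl fun C _ => ?_
  rcases eq_or_lt_of_le (hmnn C) with h | h
  · simp [← h]
  · have hC := hrect C h
    set P := C.image Prod.fst with hP
    set Q := C.image Prod.snd with hQ
    have h1 : C ⊆ A ×ˢ (univ : Finset Ω₂) ↔ P ⊆ A := by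
      constructor
      · intro hs x hx
        obtain ⟨p, hp, rfl⟩ := Finset.mem_image.mp hx
        exact (Finset.mem_product.mp (hs hp)).1
      · intro hs p hp
        exact Finset.mem_product.mpr ⟨hs (Finset.mem_image_of_mem _ hp), Finset.mem_univ _⟩
    have h2 : C ⊆ (univ : Finset Ω₁) ×ˢ B ↔ Q ⊆ B := by
      constructor
      · intro hs x hx
        obtain ⟨p, hp, rfl⟩ := Finset.mem_image.mp hx
        exact (Finset.mem_product.mp (hs hp)).2
      · intro hs p hp
        exact Finset.mem_product.mpr ⟨Finset.mem_univ _, hs (Finset.mem_image_of_mem _ hp)⟩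
    have h3 : C ⊆ A ×ˢ B ↔ P ⊆ A ∧ Q ⊆ B := by
      constructor
      · intro hs
        constructor
        · intro x hx
          obtain ⟨p, hp, rfl⟩ := Finset.mem_image.mp hx
          exact (Finset.mem_product.mp (hs hp)).1
        · intro x hx
          obtain ⟨p, hp, rfl⟩ := Finset.mem_image.mp hx
          exact (Finset.mem_product.mp (hs hp)).2
      · rintro ⟨hA, hB⟩ p hp
        exact Finset.mem_product.mpr ⟨hA (Finset.mem_image_of_mem _ hp),
          hB (Finset.mem_image_of_mem _ hp)⟩
    have h4 : C ⊆ (A ×ˢ (univ : Finset Ω₂)) ∪ ((univ : Finset Ω₁) ×ˢ B) ↔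
        P ⊆ A ∨ Q ⊆ B := by
      constructor
      · intro hs
        by_contra hcon
        push_neg at hcon
        obtain ⟨a, ha, haA⟩ := Finset.not_subset.mp hcon.1
        obtain ⟨b, hb, hbB⟩ := Finset.not_subset.mp hcon.2
        have hab : (a, b) ∈ C := by
          rw [hC]; exact Finset.mem_product.mpr ⟨ha, hb⟩
        rcases Finset.mem_union.mp (hs hab) with hmem | hmem
        · exact haA (Finset.mem_product.mp hmem).1
        · exact hbB (Finset.mem_product.mp hmem).2
      · rintro (hA | hB)
        · exact (h1.mpr hA).trans Finset.subset_union_left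
        · exact (h2.mpr hB).trans Finset.subset_union_right
    by_cases hPA : P ⊆ A <;> by_cases hQB : Q ⊆ B <;>
      simp [h1, h2, h3, h4, hPA, hQB]
end

section
/- If m satisfies the product rule m(A × B) = m₁(A)·m₂(B) for all A ⊆ Ω₁, B ⊆ Ω₂ (where m₁, m₂ are the marginal basic belief assignments), then m concentrates on rectangles: m(C) = 0 whenever C is not of the form A × B. -/
open Finset

theorem product_masses_concentrate_on_rectangles {Ω₁ Ω₂ : Type*} [Fintype Ω₁] [Fintype Ω₂]
    [DecidableEq Ω₁] [DecidableEq Ω₂]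
    (m : Finset (Ω₁ × Ω₂) → ℝ) (hm0 : m ∅ = 0) (hmnn : ∀ C, 0 ≤ m C)
    (hmsum : ∑ C : Finset (Ω₁ × Ω₂), m C = 1)
    (m₁ : Finset Ω₁ → ℝ)
    (hm₁ : ∀ A : Finset Ω₁,
      m₁ A = ∑ C ∈ univ.filter (fun C : Finset (Ω₁ × Ω₂) => C.image Prod.fst = A), m C)
    (m₂ : Finset Ω₂ → ℝ)
    (hm₂ : ∀ B : Finset Ω₂,
      m₂ B = ∑ C ∈ univ.filter (fun C : Finset (Ω₁ × Ω₂) => C.image Prod.snd = B), m C)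
    (hprod : ∀ (A : Finset Ω₁) (B : Finset Ω₂), m (A ×ˢ B) = m₁ A * m₂ B) :
    ∀ C : Finset (Ω₁ × Ω₂), (¬ ∃ (A : Finset Ω₁) (B : Finset Ω₂), C = A ×ˢ B) → m C = 0 := by
  classical
  -- marginals sum to 1
  have hm1sum : ∑ A : Finset Ω₁, m₁ A = 1 := by
    simp_rw [hm₁]
    rw [Finset.sum_fiberwise]
    exact hmsum
  have hm2sum : ∑ B : Finset Ω₂, m₂ B = 1 := by
    simp_rw [hm₂]
    rw [Finset.sum_fiberwise]
    exact hmsum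
  -- sum over all pairs
  have hpairs : ∑ p : Finset Ω₁ × Finset Ω₂, m (p.1 ×ˢ p.2) = 1 := by
    simp_rw [hprod]
    rw [Fintype.sum_prod_type, ← Finset.sum_mul_sum, hm1sum, hm2sum, one_mul]
  set P : Finset (Ω₁ × Ω₂) → Prop := fun C => ∃ (A : Finset Ω₁) (B : Finset Ω₂), C = A ×ˢ B with hP
  set Q : Finset Ω₁ × Finset Ω₂ → Prop := fun p => p.1.Nonempty ∧ p.2.Nonempty with hQ
  -- split pairs into nonempty / degenerate
  have hsplit : ∑ p ∈ univ.filter Q, m (p.1 ×ˢ p.2) = 1 := by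
    rw [← hpairs, ← Finset.sum_filter_add_sum_filter_not univ Q (fun p => m (p.1 ×ˢ p.2))]
    have hz : ∑ p ∈ univ.filter (fun p => ¬ Q p), m (p.1 ×ˢ p.2) = 0 := by
      apply Finset.sum_eq_zero
      intro p hp
      simp only [mem_filter, hQ, not_and_or, Finset.not_nonempty_iff_eq_empty] at hp
      rcases hp.2 with h | h <;> simp [h, hm0]
    rw [hz, add_zero]
  -- inject into rectangles
  have hinj : Set.InjOn (fun p : Finset Ω₁ × Finset Ω₂ => p.1 ×ˢ p.2) (univ.filter Q) := by
    intro p hp q hq h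
    simp only [coe_filter, Set.mem_setOf_eq, hQ] at hp hq
    dsimp only at h
    have h1 : p.1 = q.1 := by
      rw [← Finset.product_image_fst (s := p.1) hp.2.2,
        ← Finset.product_image_fst (s := q.1) hq.2.2, h]
    have h2 : p.2 = q.2 := by
      rw [← Finset.product_image_snd (t := p.2) hp.2.1,
        ← Finset.product_image_snd (t := q.2) hq.2.1, h]
    exact Prod.ext h1 h2
  have himg : ∑ C ∈ (univ.filter Q).image (fun p : Finset Ω₁ × Finset Ω₂ => p.1 ×ˢ p.2),
      m C = 1 := by
    rw [Finset.sum_image (fun p hp q hq => hinj hp hq)]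
    exact hsplit
  -- the image is contained in the rectangles
  have hsub : (univ.filter Q).image (fun p : Finset Ω₁ × Finset Ω₂ => p.1 ×ˢ p.2)
      ⊆ univ.filter P := by
    intro C hC
    simp only [mem_image, mem_filter, mem_univ, true_and, hP] at hC ⊢
    obtain ⟨p, _, hpC⟩ := hC
    exact ⟨p.1, p.2, hpC.symm⟩
  -- hence rectangles carry all mass
  have hrect : ∑ C ∈ univ.filter P, m C = 1 := by
    have hle : ∑ C ∈ (univ.filter Q).image (fun p : Finset Ω₁ × Finset Ω₂ => p.1 ×ˢ p.2), m C
        ≤ ∑ C ∈ univ.filter P, m C :=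
      Finset.sum_le_sum_of_subset_of_nonneg hsub (fun C _ _ => hmnn C)
    have hle2 : ∑ C ∈ univ.filter P, m C ≤ ∑ C : Finset (Ω₁ × Ω₂), m C :=
      Finset.sum_le_sum_of_subset_of_nonneg (filter_subset _ _) (fun C _ _ => hmnn C)
    rw [himg] at hle
    rw [hmsum] at hle2
    linarith
  -- non-rectangles sum to zero
  have hzero : ∑ C ∈ univ.filter (fun C => ¬ P C), m C = 0 := by
    have := Finset.sum_filter_add_sum_filter_not univ P m
    rw [hmsum, hrect] at this
    linarith
  intro C hC
  have hCmem : C ∈ univ.filter (fun C => ¬ P C) := by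
    simp only [mem_filter, mem_univ, true_and, hP]
    exact hC
  exact (Finset.sum_eq_zero_iff_of_nonneg (fun D _ => hmnn D)).mp hzero C hCmem
end

section
/- If m satisfies m(A × B) = m₁(A)·m₂(B) for all A ⊆ Ω₁, B ⊆ Ω₂, then conditioning on {Y ∈ B} does not change belief about X: for all A ⊆ Ω₁ and B ⊆ Ω₂ with Bel(Ω₁ × Bᶜ) ≠ 1, Bel_{Ω₁ × B}(A × Ω₂) = Bel(A × Ω₂). -/
open Finset

private lemma sum_filter_congr_ne {α : Type*} {s : Finset α} {p q : α → Prop}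
    [DecidablePred p] [DecidablePred q] {f : α → ℝ}
    (h : ∀ x ∈ s, f x ≠ 0 → (p x ↔ q x)) :
    ∑ x ∈ s.filter p, f x = ∑ x ∈ s.filter q, f x := by
  rw [Finset.sum_filter, Finset.sum_filter]
  refine Finset.sum_congr rfl fun x hx => ?_
  by_cases hf : f x = 0
  · simp [hf]
  · simp only [h x hx hf]

private lemma sum_prod_filter_split {α β : Type*} [Fintype α] [Fintype β]
    (p : α → Prop) (q : β → Prop) [DecidablePred p] [DecidablePred q]
    (f : α → ℝ) (g : β → ℝ) :
    ∑ pr ∈ univ.filter (fun pr : α × β => p pr.1 ∧ q pr.2), f pr.1 * g pr.2 =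
      (∑ a ∈ univ.filter p, f a) * (∑ b ∈ univ.filter q, g b) := by
  rw [Finset.sum_filter, Fintype.sum_prod_type, Finset.sum_mul_sum]
  simp only [Finset.sum_filter]
  refine Finset.sum_congr rfl fun a _ => ?_
  by_cases ha : p a <;> simp [ha]

set_option maxHeartbeats 1000000 in
theorem independence_conditioning_invariance {Ω₁ Ω₂ : Type*} [Fintype Ω₁] [Fintype Ω₂]
    [DecidableEq Ω₁] [DecidableEq Ω₂]
    (m : Finset (Ω₁ × Ω₂) → ℝ) (hm0 : m ∅ = 0) (hmnn : ∀ C, 0 ≤ m C)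
    (hmsum : ∑ C : Finset (Ω₁ × Ω₂), m C = 1)
    (Bel : Finset (Ω₁ × Ω₂) → ℝ) (hBel : ∀ A, Bel A = ∑ C ∈ A.powerset, m C)
    (m₁ : Finset Ω₁ → ℝ)
    (hm₁ : ∀ A : Finset Ω₁,
      m₁ A = ∑ C ∈ univ.filter (fun C : Finset (Ω₁ × Ω₂) => C.image Prod.fst = A), m C)
    (m₂ : Finset Ω₂ → ℝ)
    (hm₂ : ∀ B : Finset Ω₂,
      m₂ B = ∑ C ∈ univ.filter (fun C : Finset (Ω₁ × Ω₂) => C.image Prod.snd = B), m C)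
    (hprod : ∀ (A : Finset Ω₁) (B : Finset Ω₂), m (A ×ˢ B) = m₁ A * m₂ B) :
    ∀ (A : Finset Ω₁) (B : Finset Ω₂), Bel (univ ×ˢ Bᶜ) ≠ 1 →
      (Bel ((A ×ˢ univ) ∪ (univ ×ˢ B)ᶜ) - Bel ((univ ×ˢ B)ᶜ)) / (1 - Bel ((univ ×ˢ B)ᶜ)) =
        Bel (A ×ˢ univ) := by
  intro A B hne
  -- basic facts
  have hm₁0 : m₁ ∅ = 0 := by
    rw [hm₁]
    have h : univ.filter (fun C : Finset (Ω₁ × Ω₂) => C.image Prod.fst = ∅) = {∅} := by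
      ext C; simp [Finset.image_eq_empty]
    rw [h, Finset.sum_singleton, hm0]
  have hm₂0 : m₂ ∅ = 0 := by
    rw [hm₂]
    have h : univ.filter (fun C : Finset (Ω₁ × Ω₂) => C.image Prod.snd = ∅) = {∅} := by
      ext C; simp [Finset.image_eq_empty]
    rw [h, Finset.sum_singleton, hm0]
  have hsum₁ : ∑ A' : Finset Ω₁, m₁ A' = 1 := by
    calc ∑ A' : Finset Ω₁, m₁ A'
        = ∑ A' : Finset Ω₁,
            ∑ C ∈ univ.filter (fun C : Finset (Ω₁ × Ω₂) => C.image Prod.fst = A'), m C := by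
          exact Finset.sum_congr rfl fun A' _ => hm₁ A'
      _ = ∑ C : Finset (Ω₁ × Ω₂), m C := Finset.sum_fiberwise _ _ _
      _ = 1 := hmsum
  have hsum₂ : ∑ B' : Finset Ω₂, m₂ B' = 1 := by
    calc ∑ B' : Finset Ω₂, m₂ B'
        = ∑ B' : Finset Ω₂,
            ∑ C ∈ univ.filter (fun C : Finset (Ω₁ × Ω₂) => C.image Prod.snd = B'), m C := by
          exact Finset.sum_congr rfl fun B' _ => hm₂ B'
      _ = ∑ C : Finset (Ω₁ × Ω₂), m C := Finset.sum_fiberwise _ _ _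
      _ = 1 := hmsum
  have hsum₁NE : ∑ A' ∈ univ.filter Finset.Nonempty, m₁ A' = 1 := by
    rw [← hsum₁]
    apply Finset.sum_subset (Finset.filter_subset _ _)
    intro x _ hx
    have hx' : x = ∅ := by
      simpa [Finset.not_nonempty_iff_eq_empty] using (Finset.mem_filter.not.mp hx)
    rw [hx', hm₁0]
  have hsum₂NE : ∑ B' ∈ univ.filter Finset.Nonempty, m₂ B' = 1 := by
    rw [← hsum₂]
    apply Finset.sum_subset (Finset.filter_subset _ _)
    intro x _ hx
    have hx' : x = ∅ := by
      simpa [Finset.not_nonempty_iff_eq_empty] using (Finset.mem_filter.not.mp hx)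
    rw [hx', hm₂0]
  -- the support : products of nonempty pairs
  have hinj : ∀ pr ∈ (univ.filter Finset.Nonempty) ×ˢ (univ.filter Finset.Nonempty),
      ∀ pr' ∈ (univ.filter Finset.Nonempty) ×ˢ (univ.filter Finset.Nonempty),
      (fun pr : Finset Ω₁ × Finset Ω₂ => pr.1 ×ˢ pr.2) pr
        = (fun pr : Finset Ω₁ × Finset Ω₂ => pr.1 ×ˢ pr.2) pr' → pr = pr' := by
    rintro ⟨a, b⟩ hab ⟨c, d⟩ hcd h
    simp only [Finset.mem_product, Finset.mem_filter, Finset.mem_univ, true_and] at hab hcd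
    simp only at h
    have h1 : a = c := by
      have h' := congrArg (Finset.image Prod.fst) h
      rwa [Finset.product_image_fst hab.2, Finset.product_image_fst hcd.2] at h'
    have h2 : b = d := by
      have h' := congrArg (Finset.image Prod.snd) h
      rwa [Finset.product_image_snd hab.1, Finset.product_image_snd hcd.1] at h'
    simp [h1, h2]
  have hSsum : ∑ C ∈ ((univ.filter Finset.Nonempty) ×ˢ (univ.filter Finset.Nonempty)).image
      (fun pr : Finset Ω₁ × Finset Ω₂ => pr.1 ×ˢ pr.2), m C = 1 := by
    rw [Finset.sum_image hinj, Finset.sum_product]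
    calc ∑ a ∈ univ.filter Finset.Nonempty, ∑ b ∈ univ.filter Finset.Nonempty, m (a ×ˢ b)
        = ∑ a ∈ univ.filter Finset.Nonempty, ∑ b ∈ univ.filter Finset.Nonempty, m₁ a * m₂ b := by
          exact Finset.sum_congr rfl fun a _ => Finset.sum_congr rfl fun b _ => hprod a b
      _ = (∑ a ∈ univ.filter Finset.Nonempty, m₁ a) * ∑ b ∈ univ.filter Finset.Nonempty, m₂ b :=
          (Finset.sum_mul_sum _ _ _ _).symm
      _ = 1 := by rw [hsum₁NE, hsum₂NE, mul_one]
  have hzero : ∀ C : Finset (Ω₁ × Ω₂),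
      C ∉ ((univ.filter Finset.Nonempty) ×ˢ (univ.filter Finset.Nonempty)).image
        (fun pr : Finset Ω₁ × Finset Ω₂ => pr.1 ×ˢ pr.2) → m C = 0 := by
    have hc : ∑ C ∈ (((univ.filter Finset.Nonempty) ×ˢ (univ.filter Finset.Nonempty)).image
        (fun pr : Finset Ω₁ × Finset Ω₂ => pr.1 ×ˢ pr.2))ᶜ, m C = 0 := by
      have h := Finset.sum_add_sum_compl (((univ.filter Finset.Nonempty) ×ˢ
        (univ.filter Finset.Nonempty)).image
        (fun pr : Finset Ω₁ × Finset Ω₂ => pr.1 ×ˢ pr.2)) m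
      rw [hSsum, hmsum] at h
      linarith
    intro C hC
    exact (Finset.sum_eq_zero_iff_of_nonneg (fun i _ => hmnn i)).1 hc C (Finset.mem_compl.mpr hC)
  -- Bel as a sum over pairs
  have hBel' : ∀ X : Finset (Ω₁ × Ω₂), Bel X =
      ∑ pr ∈ univ.filter (fun pr : Finset Ω₁ × Finset Ω₂ =>
        pr.1 ×ˢ pr.2 ⊆ X ∧ pr.1.Nonempty ∧ pr.2.Nonempty), m₁ pr.1 * m₂ pr.2 := by
    intro X
    rw [hBel]
    have step1 : ∑ C ∈ X.powerset, m C =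
        ∑ C ∈ (((univ.filter Finset.Nonempty) ×ˢ (univ.filter Finset.Nonempty)).image
          (fun pr : Finset Ω₁ × Finset Ω₂ => pr.1 ×ˢ pr.2)).filter (· ⊆ X), m C := by
      symm
      apply Finset.sum_subset
      · intro C hC
        rw [Finset.mem_powerset]
        exact (Finset.mem_filter.mp hC).2
      · intro C hC hC2
        apply hzero
        intro hCS
        exact hC2 (Finset.mem_filter.mpr ⟨hCS, Finset.mem_powerset.mp hC⟩)
    rw [step1, Finset.filter_image]
    rw [Finset.sum_image (fun x hx y hy h =>
      hinj x (Finset.mem_of_mem_filter x hx) y (Finset.mem_of_mem_filter y hy) h)]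
    have step2 : (((univ.filter Finset.Nonempty) ×ˢ (univ.filter Finset.Nonempty)).filter
        (fun pr : Finset Ω₁ × Finset Ω₂ => pr.1 ×ˢ pr.2 ⊆ X)) =
        univ.filter (fun pr : Finset Ω₁ × Finset Ω₂ =>
          pr.1 ×ˢ pr.2 ⊆ X ∧ pr.1.Nonempty ∧ pr.2.Nonempty) := by
      ext pr
      simp only [Finset.mem_filter, Finset.mem_product, Finset.mem_univ, true_and]
      tauto
    rw [step2]
    exact Finset.sum_congr rfl fun pr _ => hprod pr.1 pr.2
  -- nonvanishing terms have nonempty components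
  have hF : ∀ pr : Finset Ω₁ × Finset Ω₂, m₁ pr.1 * m₂ pr.2 ≠ 0 →
      pr.1.Nonempty ∧ pr.2.Nonempty := by
    intro pr h
    constructor
    · rw [Finset.nonempty_iff_ne_empty]
      intro he
      exact h (by rw [he, hm₁0, zero_mul])
    · rw [Finset.nonempty_iff_ne_empty]
      intro he
      exact h (by rw [he, hm₂0, mul_zero])
  -- abbreviations
  set a : ℝ := ∑ A' ∈ univ.filter (· ⊆ A), m₁ A' with ha
  set b : ℝ := ∑ B' ∈ univ.filter (· ⊆ Bᶜ), m₂ B' with hb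
  have sP : ∑ pr ∈ univ.filter (fun pr : Finset Ω₁ × Finset Ω₂ => pr.1 ⊆ A),
      m₁ pr.1 * m₂ pr.2 = a := by
    rw [sum_filter_congr_ne (q := fun pr : Finset Ω₁ × Finset Ω₂ => pr.1 ⊆ A ∧ True)
      (fun x _ _ => by tauto),
      sum_prod_filter_split (fun s : Finset Ω₁ => s ⊆ A) (fun _ : Finset Ω₂ => True) m₁ m₂,
      Finset.filter_true, hsum₂, mul_one]
  have sQ : ∑ pr ∈ univ.filter (fun pr : Finset Ω₁ × Finset Ω₂ => pr.2 ⊆ Bᶜ),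
      m₁ pr.1 * m₂ pr.2 = b := by
    rw [sum_filter_congr_ne (q := fun pr : Finset Ω₁ × Finset Ω₂ => True ∧ pr.2 ⊆ Bᶜ)
      (fun x _ _ => by tauto),
      sum_prod_filter_split (fun _ : Finset Ω₁ => True) (fun s : Finset Ω₂ => s ⊆ Bᶜ) m₁ m₂,
      Finset.filter_true, hsum₁, one_mul]
  have sPQ : ∑ pr ∈ univ.filter (fun pr : Finset Ω₁ × Finset Ω₂ => pr.1 ⊆ A ∧ pr.2 ⊆ Bᶜ),
      m₁ pr.1 * m₂ pr.2 = a * b :=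
    sum_prod_filter_split (fun s : Finset Ω₁ => s ⊆ A) (fun s : Finset Ω₂ => s ⊆ Bᶜ) m₁ m₂
  -- the three Bel evaluations
  have e1 : Bel (A ×ˢ univ) = a := by
    rw [hBel' (A ×ˢ univ)]
    rw [sum_filter_congr_ne (q := fun pr : Finset Ω₁ × Finset Ω₂ => pr.1 ⊆ A) ?_]
    · exact sP
    · intro pr _ hf
      obtain ⟨h1, h2⟩ := hF pr hf
      constructor
      · rintro ⟨hs, -, -⟩
        intro x hx
        obtain ⟨y, hy⟩ := h2
        exact (Finset.mem_product.mp (hs (Finset.mk_mem_product hx hy))).1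
      · intro hs
        refine ⟨?_, h1, h2⟩
        intro z hz
        rw [Finset.mem_product] at hz ⊢
        exact ⟨hs hz.1, Finset.mem_univ _⟩
  have e2 : Bel (univ ×ˢ Bᶜ) = b := by
    rw [hBel' (univ ×ˢ Bᶜ)]
    rw [sum_filter_congr_ne (q := fun pr : Finset Ω₁ × Finset Ω₂ => pr.2 ⊆ Bᶜ) ?_]
    · exact sQ
    · intro pr _ hf
      obtain ⟨h1, h2⟩ := hF pr hf
      constructor
      · rintro ⟨hs, -, -⟩
        intro y hy
        obtain ⟨x, hx⟩ := h1
        exact (Finset.mem_product.mp (hs (Finset.mk_mem_product hx hy))).2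
      · intro hs
        refine ⟨?_, h1, h2⟩
        intro z hz
        rw [Finset.mem_product] at hz ⊢
        exact ⟨Finset.mem_univ _, hs hz.2⟩
  have e3 : Bel ((A ×ˢ univ) ∪ (univ ×ˢ Bᶜ)) = a + b - a * b := by
    rw [hBel' ((A ×ˢ univ) ∪ (univ ×ˢ Bᶜ))]
    rw [sum_filter_congr_ne
      (q := fun pr : Finset Ω₁ × Finset Ω₂ => pr.1 ⊆ A ∨ pr.2 ⊆ Bᶜ) ?_]
    · have hIE := Finset.sum_union_inter
        (s₁ := univ.filter (fun pr : Finset Ω₁ × Finset Ω₂ => pr.1 ⊆ A))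
        (s₂ := univ.filter (fun pr : Finset Ω₁ × Finset Ω₂ => pr.2 ⊆ Bᶜ))
        (f := fun pr : Finset Ω₁ × Finset Ω₂ => m₁ pr.1 * m₂ pr.2)
      rw [← Finset.filter_or, ← Finset.filter_and] at hIE
      rw [sP, sQ, sPQ] at hIE
      linarith
    · intro pr _ hf
      obtain ⟨h1, h2⟩ := hF pr hf
      constructor
      · rintro ⟨hs, -, -⟩
        by_contra hcon
        push_neg at hcon
        obtain ⟨x, hx, hxA⟩ := Finset.not_subset.mp hcon.1
        obtain ⟨y, hy, hyB⟩ := Finset.not_subset.mp hcon.2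
        have hmem := hs (Finset.mk_mem_product hx hy)
        rcases Finset.mem_union.mp hmem with h | h
        · exact hxA (Finset.mem_product.mp h).1
        · exact hyB (Finset.mem_product.mp h).2
      · rintro (hs | hs)
        · refine ⟨?_, h1, h2⟩
          intro z hz
          rw [Finset.mem_product] at hz
          exact Finset.mem_union.mpr (Or.inl (Finset.mem_product.mpr ⟨hs hz.1, Finset.mem_univ _⟩))
        · refine ⟨?_, h1, h2⟩
          intro z hz
          rw [Finset.mem_product] at hz
          exact Finset.mem_union.mpr (Or.inr (Finset.mem_product.mpr ⟨Finset.mem_univ _, hs hz.2⟩))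
  -- finish
  have hcompl : ((univ ×ˢ B)ᶜ : Finset (Ω₁ × Ω₂)) = univ ×ˢ Bᶜ := by
    ext pr
    simp [Finset.mem_product]
  rw [hcompl, e1, e2, e3]
  have hbne : b ≠ 1 := by rw [e2] at hne; exact hne
  have h1b : (1 : ℝ) - b ≠ 0 := sub_ne_zero.mpr (Ne.symm hbne)
  field_simp
  ring
end

section
/- Product-of-beliefs implies product-of-masses: if m concentrates on rectangles and Bel(A × B) = Bel(A × Ω₂)·Bel(Ω₁ × B) for all A ⊆ Ω₁, B ⊆ Ω₂, then m(A × B) = m₁(A)·m₂(B) for all A ⊆ Ω₁, B ⊆ Ω₂. -/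
open Finset

private lemma mobius_two_zero {α β : Type*} [DecidableEq α] [DecidableEq β]
    (d : Finset α → Finset β → ℝ)
    (h : ∀ (A : Finset α) (B : Finset β), ∑ X ∈ A.powerset, ∑ Y ∈ B.powerset, d X Y = 0) :
    ∀ (A : Finset α) (B : Finset β), d A B = 0 := by
  have key : ∀ n : ℕ, ∀ A B, A.card + B.card = n → d A B = 0 := by
    intro n
    induction n using Nat.strong_induction_on with
    | _ n ih =>
      intro A B hn
      have h1 := h A B
      rw [← Finset.sum_product'] at h1
      have hmem : (A, B) ∈ A.powerset ×ˢ B.powerset := by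
        simp [Finset.mem_product]
      rw [← Finset.add_sum_erase _ _ hmem] at h1
      have hz : ∑ p ∈ (A.powerset ×ˢ B.powerset).erase (A, B), d p.1 p.2 = 0 := by
        apply Finset.sum_eq_zero
        intro p hp
        have hp' := Finset.mem_of_mem_erase hp
        rw [Finset.mem_product, Finset.mem_powerset, Finset.mem_powerset] at hp'
        have hne := Finset.ne_of_mem_erase hp
        have hc1 : p.1.card ≤ A.card := Finset.card_le_card hp'.1
        have hc2 : p.2.card ≤ B.card := Finset.card_le_card hp'.2
        have hlt : p.1.card + p.2.card < n := by
          rcases lt_or_eq_of_le hc1 with h' | h'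
          · omega
          · rcases lt_or_eq_of_le hc2 with h'' | h''
            · omega
            · exact absurd (Prod.ext (Finset.eq_of_subset_of_card_le hp'.1 h'.ge)
                (Finset.eq_of_subset_of_card_le hp'.2 h''.ge)) hne
        exact ih _ hlt p.1 p.2 rfl
      rw [hz, add_zero] at h1
      exact h1
  exact fun A B => key _ A B rfl

private lemma subset_prod_iff {α β : Type*} [DecidableEq α] [DecidableEq β]
    (C : Finset (α × β)) (A : Finset α) (B : Finset β) :
    C ⊆ A ×ˢ B ↔ C.image Prod.fst ⊆ A ∧ C.image Prod.snd ⊆ B := by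
  constructor
  · intro h
    constructor
    · intro x hx
      obtain ⟨c, hc, rfl⟩ := Finset.mem_image.1 hx
      exact (Finset.mem_product.1 (h hc)).1
    · intro y hy
      obtain ⟨c, hc, rfl⟩ := Finset.mem_image.1 hy
      exact (Finset.mem_product.1 (h hc)).2
  · rintro ⟨h1, h2⟩ c hc
    exact Finset.mem_product.2 ⟨h1 (Finset.mem_image_of_mem _ hc),
      h2 (Finset.mem_image_of_mem _ hc)⟩

theorem belief_product_implies_mass_product {Ω₁ Ω₂ : Type*} [Fintype Ω₁] [Fintype Ω₂]
    [DecidableEq Ω₁] [DecidableEq Ω₂]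
    (m : Finset (Ω₁ × Ω₂) → ℝ) (hm0 : m ∅ = 0) (hmnn : ∀ C, 0 ≤ m C)
    (hmsum : ∑ C : Finset (Ω₁ × Ω₂), m C = 1)
    (Bel : Finset (Ω₁ × Ω₂) → ℝ) (hBel : ∀ A, Bel A = ∑ C ∈ A.powerset, m C)
    (hrect : ∀ C : Finset (Ω₁ × Ω₂), 0 < m C → C = (C.image Prod.fst) ×ˢ (C.image Prod.snd))
    (m₁ : Finset Ω₁ → ℝ)
    (hm₁ : ∀ A : Finset Ω₁,
      m₁ A = ∑ C ∈ univ.filter (fun C : Finset (Ω₁ × Ω₂) => C.image Prod.fst = A), m C)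
    (m₂ : Finset Ω₂ → ℝ)
    (hm₂ : ∀ B : Finset Ω₂,
      m₂ B = ∑ C ∈ univ.filter (fun C : Finset (Ω₁ × Ω₂) => C.image Prod.snd = B), m C)
    (hBelprod : ∀ (A : Finset Ω₁) (B : Finset Ω₂),
      Bel (A ×ˢ B) = Bel (A ×ˢ univ) * Bel (univ ×ˢ B)) :
    ∀ (A : Finset Ω₁) (B : Finset Ω₂), m (A ×ˢ B) = m₁ A * m₂ B := by
  classical
  -- the two-variable fiber mass
  set g : Finset Ω₁ → Finset Ω₂ → ℝ := fun X Y =>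
    ∑ C ∈ univ.filter (fun C : Finset (Ω₁ × Ω₂) =>
      C.image Prod.fst = X ∧ C.image Prod.snd = Y), m C with hg
  -- Bel of a product is the double sum of fibers
  have hBelg : ∀ (A : Finset Ω₁) (B : Finset Ω₂),
      Bel (A ×ˢ B) = ∑ X ∈ A.powerset, ∑ Y ∈ B.powerset, g X Y := by
    intro A B
    rw [hBel]
    rw [← Finset.sum_product']
    have hmaps : ∀ C ∈ (A ×ˢ B).powerset,
        (C.image Prod.fst, C.image Prod.snd) ∈ A.powerset ×ˢ B.powerset := by
      intro C hC
      rw [Finset.mem_powerset] at hC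
      rw [Finset.mem_product, Finset.mem_powerset, Finset.mem_powerset]
      exact (subset_prod_iff C A B).1 hC
    rw [← Finset.sum_fiberwise_of_maps_to hmaps m]
    apply Finset.sum_congr rfl
    intro p hp
    rw [Finset.mem_product, Finset.mem_powerset, Finset.mem_powerset] at hp
    apply Finset.sum_congr _ (fun _ _ => rfl)
    ext C
    simp only [Finset.mem_filter, Finset.mem_powerset, Finset.mem_univ, true_and,
      Prod.ext_iff, Prod.mk.injEq]
    constructor
    · rintro ⟨-, h1, h2⟩; exact ⟨h1, h2⟩
    · rintro ⟨h1, h2⟩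
      refine ⟨(subset_prod_iff C A B).2 ⟨h1 ▸ hp.1, h2 ▸ hp.2⟩, h1, h2⟩
  -- marginal Bel sums
  have hBel₁ : ∀ A : Finset Ω₁, Bel (A ×ˢ (univ : Finset Ω₂)) = ∑ X ∈ A.powerset, m₁ X := by
    intro A
    rw [hBel]
    have hmaps : ∀ C ∈ (A ×ˢ (univ : Finset Ω₂)).powerset, C.image Prod.fst ∈ A.powerset := by
      intro C hC
      rw [Finset.mem_powerset] at hC ⊢
      exact ((subset_prod_iff C A univ).1 hC).1
    rw [← Finset.sum_fiberwise_of_maps_to hmaps m]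
    apply Finset.sum_congr rfl
    intro X hX
    rw [Finset.mem_powerset] at hX
    rw [hm₁]
    apply Finset.sum_congr _ (fun _ _ => rfl)
    ext C
    simp only [Finset.mem_filter, Finset.mem_powerset, Finset.mem_univ, true_and]
    constructor
    · rintro ⟨-, h⟩; exact h
    · intro h
      exact ⟨(subset_prod_iff C A univ).2 ⟨h ▸ hX, Finset.subset_univ _⟩, h⟩
  have hBel₂ : ∀ B : Finset Ω₂, Bel ((univ : Finset Ω₁) ×ˢ B) = ∑ Y ∈ B.powerset, m₂ Y := by
    intro B
    rw [hBel]
    have hmaps : ∀ C ∈ ((univ : Finset Ω₁) ×ˢ B).powerset, C.image Prod.snd ∈ B.powerset := by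
      intro C hC
      rw [Finset.mem_powerset] at hC ⊢
      exact ((subset_prod_iff C univ B).1 hC).2
    rw [← Finset.sum_fiberwise_of_maps_to hmaps m]
    apply Finset.sum_congr rfl
    intro Y hY
    rw [Finset.mem_powerset] at hY
    rw [hm₂]
    apply Finset.sum_congr _ (fun _ _ => rfl)
    ext C
    simp only [Finset.mem_filter, Finset.mem_powerset, Finset.mem_univ, true_and]
    constructor
    · rintro ⟨-, h⟩; exact h
    · intro h
      exact ⟨(subset_prod_iff C univ B).2 ⟨Finset.subset_univ _, h ▸ hY⟩, h⟩
  -- Möbius inversion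
  have hgprod : ∀ A B, g A B = m₁ A * m₂ B := by
    have := mobius_two_zero (fun X Y => g X Y - m₁ X * m₂ Y) ?_
    · intro A B
      have h := this A B
      linarith
    · intro A B
      rw [Finset.sum_congr rfl (fun X _ => Finset.sum_sub_distrib _ _),
        Finset.sum_sub_distrib]
      rw [← hBelg A B]
      have : ∑ X ∈ A.powerset, ∑ Y ∈ B.powerset, m₁ X * m₂ Y
          = (∑ X ∈ A.powerset, m₁ X) * (∑ Y ∈ B.powerset, m₂ Y) := by
        rw [Finset.sum_mul]
        exact Finset.sum_congr rfl fun X _ => (Finset.mul_sum _ _ _).symm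
      rw [this, ← hBel₁, ← hBel₂, hBelprod, sub_self]
  -- finish
  intro A B
  rcases Finset.eq_empty_or_nonempty A with rfl | hA
  · have : m₁ (∅ : Finset Ω₁) = 0 := by
      rw [hm₁]
      have : (univ.filter fun C : Finset (Ω₁ × Ω₂) => C.image Prod.fst = ∅) = {∅} := by
        ext C
        simp [Finset.image_eq_empty]
      rw [this, Finset.sum_singleton, hm0]
    rw [Finset.empty_product, hm0, this, zero_mul]
  rcases Finset.eq_empty_or_nonempty B with rfl | hB
  · have : m₂ (∅ : Finset Ω₂) = 0 := by
      rw [hm₂]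
      have : (univ.filter fun C : Finset (Ω₁ × Ω₂) => C.image Prod.snd = ∅) = {∅} := by
        ext C
        simp [Finset.image_eq_empty]
      rw [this, Finset.sum_singleton, hm0]
    rw [Finset.product_empty, hm0, this, mul_zero]
  -- A, B nonempty : g A B = m (A ×ˢ B)
  rw [← hgprod, hg]
  have hABmem : (A ×ˢ B) ∈ univ.filter (fun C : Finset (Ω₁ × Ω₂) =>
      C.image Prod.fst = A ∧ C.image Prod.snd = B) := by
    simp [Finset.product_image_fst hB, Finset.product_image_snd hA]
  rw [eq_comm]
  apply Finset.sum_eq_single_of_mem _ hABmem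
  intro C hC hne
  rw [Finset.mem_filter] at hC
  by_contra hCne
  have hpos : 0 < m C := lt_of_le_of_ne (hmnn C) (Ne.symm hCne)
  have := hrect C hpos
  rw [hC.2.1, hC.2.2] at this
  exact hne this
end

section
/- Dempster's combination as conditioning on the diagonal: let m₁, m₂ be basic belief assignments on Ω, define m on Ω × Ω by m(A × B) = m₁(A)m₂(B) (zero off rectangles), and let H = {(ω,ω) : ω ∈ Ω}. Then for every nonempty A ⊆ Ω, the conditional basic belief assignment satisfies m_H({(ω,ω) : ω ∈ A}) = (Σ_{D₁∩D₂ = A} m₁(D₁)m₂(D₂)) / (1 − Σ_{D₁∩D₂ = ∅} m₁(D₁)m₂(D₂)), i.e., equals the Dempster combination (m₁ ⊕ m₂)(A), provided the denominator is nonzero. -/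
open Finset


lemma diag_inter_prod {Ω : Type*} [Fintype Ω] [DecidableEq Ω] (C₁ C₂ : Finset Ω) :
    (C₁ ×ˢ C₂) ∩ ((univ : Finset Ω).image (fun ω => (ω, ω))) =
      (C₁ ∩ C₂).image (fun ω => (ω, ω)) := by
  ext ⟨a, b⟩
  simp only [mem_inter, mem_product, mem_image, mem_univ, true_and, Prod.mk.injEq]
  constructor
  · rintro ⟨⟨h1, h2⟩, c, rfl, rfl⟩
    exact ⟨c, ⟨h1, h2⟩, rfl, rfl⟩
  · rintro ⟨c, ⟨h1, h2⟩, rfl, rfl⟩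
    exact ⟨⟨h1, h2⟩, c, rfl, rfl⟩

lemma key {Ω : Type*} [Fintype Ω] [DecidableEq Ω]
    (m₁ m₂ : Finset Ω → ℝ) (hm₁0 : m₁ ∅ = 0) (hm₂0 : m₂ ∅ = 0)
    (m : Finset (Ω × Ω) → ℝ)
    (hmrect : ∀ (A B : Finset Ω), m (A ×ˢ B) = m₁ A * m₂ B)
    (hmoff : ∀ D : Finset (Ω × Ω),
      (¬ ∃ (A B : Finset Ω), A.Nonempty ∧ B.Nonempty ∧ D = A ×ˢ B) → m D = 0)
    (A : Finset Ω) :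
    ∑ D ∈ univ.filter (fun D : Finset (Ω × Ω) =>
        D ∩ ((univ : Finset Ω).image (fun ω => (ω, ω))) = A.image (fun ω : Ω => (ω, ω))), m D
      = ∑ p ∈ univ.filter (fun p : Finset Ω × Finset Ω => p.1 ∩ p.2 = A), m₁ p.1 * m₂ p.2 := by
  classical
  have hinj : Function.Injective (fun ω : Ω => (ω, ω)) := fun a b h => (Prod.mk.injEq .. ▸ h).1
  set diag := fun (S : Finset Ω) => S.image (fun ω : Ω => (ω, ω)) with hdiag
  have hdinj : Function.Injective diag := Finset.image_injective hinj
  -- split RHS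
  rw [← Finset.sum_filter_add_sum_filter_not
      (univ.filter (fun p : Finset Ω × Finset Ω => p.1 ∩ p.2 = A))
      (fun p => p.1.Nonempty ∧ p.2.Nonempty)]
  have hz : ∑ p ∈ (univ.filter (fun p : Finset Ω × Finset Ω => p.1 ∩ p.2 = A)).filter
      (fun p => ¬(p.1.Nonempty ∧ p.2.Nonempty)), m₁ p.1 * m₂ p.2 = 0 := by
    apply Finset.sum_eq_zero
    intro p hp
    simp only [mem_filter, not_and_or, Finset.not_nonempty_iff_eq_empty] at hp
    rcases hp.2 with h | h
    · rw [h, hm₁0, zero_mul]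
    · rw [h, hm₂0, mul_zero]
  rw [hz, add_zero]
  -- split LHS
  rw [← Finset.sum_filter_add_sum_filter_not
      (univ.filter (fun D : Finset (Ω × Ω) => D ∩ (univ.image (fun ω => (ω,ω))) = diag A))
      (fun D => ∃ C₁ C₂ : Finset Ω, C₁.Nonempty ∧ C₂.Nonempty ∧ D = C₁ ×ˢ C₂)]
  have hz2 : ∑ D ∈ (univ.filter (fun D : Finset (Ω × Ω) =>
      D ∩ (univ.image (fun ω => (ω,ω))) = diag A)).filter
      (fun D => ¬ ∃ C₁ C₂ : Finset Ω, C₁.Nonempty ∧ C₂.Nonempty ∧ D = C₁ ×ˢ C₂), m D = 0 := by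
    apply Finset.sum_eq_zero
    intro D hD
    exact hmoff D (Finset.mem_filter.mp hD).2
  rw [hz2, add_zero]
  -- bijection
  apply Finset.sum_nbij' (i := fun D => (D.image Prod.fst, D.image Prod.snd))
    (j := fun p : Finset Ω × Finset Ω => p.1 ×ˢ p.2)
  · intro D hD
    simp only [mem_filter, mem_univ, true_and] at hD ⊢
    obtain ⟨hcond, C₁, C₂, h1, h2, rfl⟩ := hD
    rw [Finset.product_image_fst h2, Finset.product_image_snd h1]
    have := hcond
    rw [diag_inter_prod] at this
    refine ⟨hdinj this, h1, h2⟩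
  · intro p hp
    simp only [mem_filter, mem_univ, true_and] at hp ⊢
    obtain ⟨hA, h1, h2⟩ := hp
    exact ⟨by rw [diag_inter_prod, hA], p.1, p.2, h1, h2, rfl⟩
  · intro D hD
    simp only [mem_filter, mem_univ, true_and] at hD
    obtain ⟨hcond, C₁, C₂, h1, h2, rfl⟩ := hD
    rw [Finset.product_image_fst h2, Finset.product_image_snd h1]
  · intro p hp
    simp only [mem_filter, mem_univ, true_and] at hp
    obtain ⟨hA, h1, h2⟩ := hp
    rw [Finset.product_image_fst h2, Finset.product_image_snd h1]
  · intro D hD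
    simp only [mem_filter, mem_univ, true_and] at hD
    obtain ⟨hcond, C₁, C₂, h1, h2, rfl⟩ := hD
    rw [Finset.product_image_fst h2, Finset.product_image_snd h1, hmrect]


theorem dempster_rule_as_diagonal_conditioning {Ω : Type*} [Fintype Ω] [DecidableEq Ω]
    (m₁ m₂ : Finset Ω → ℝ)
    (hm₁0 : m₁ ∅ = 0) (hm₁nn : ∀ C, 0 ≤ m₁ C) (hm₁sum : ∑ C : Finset Ω, m₁ C = 1)
    (hm₂0 : m₂ ∅ = 0) (hm₂nn : ∀ C, 0 ≤ m₂ C) (hm₂sum : ∑ C : Finset Ω, m₂ C = 1)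
    (m : Finset (Ω × Ω) → ℝ)
    (hmrect : ∀ (A B : Finset Ω), m (A ×ˢ B) = m₁ A * m₂ B)
    (hmoff : ∀ D : Finset (Ω × Ω),
      (¬ ∃ (A B : Finset Ω), A.Nonempty ∧ B.Nonempty ∧ D = A ×ˢ B) → m D = 0)
    (H : Finset (Ω × Ω)) (hHdiag : H = univ.image (fun ω : Ω => (ω, ω)))
    (mH : Finset (Ω × Ω) → ℝ)
    (hmH : ∀ S : Finset (Ω × Ω), S ≠ ∅ →
      mH S = (∑ D ∈ univ.filter (fun D : Finset (Ω × Ω) => D ∩ H = S), m D) /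
        (1 - ∑ D ∈ univ.filter (fun D : Finset (Ω × Ω) => D ∩ H = ∅), m D))
    (hdenom : 1 - ∑ p ∈ univ.filter
        (fun p : Finset Ω × Finset Ω => p.1 ∩ p.2 = ∅), m₁ p.1 * m₂ p.2 ≠ 0) :
    ∀ A : Finset Ω, A.Nonempty →
      mH (A.image (fun ω : Ω => (ω, ω))) =
        (∑ p ∈ univ.filter (fun p : Finset Ω × Finset Ω => p.1 ∩ p.2 = A), m₁ p.1 * m₂ p.2) /
        (1 - ∑ p ∈ univ.filter
          (fun p : Finset Ω × Finset Ω => p.1 ∩ p.2 = ∅), m₁ p.1 * m₂ p.2) := by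
  intro A hA
  subst hHdiag
  rw [hmH _ (Finset.nonempty_iff_ne_empty.mp (hA.image _))]
  rw [key m₁ m₂ hm₁0 hm₂0 m hmrect hmoff A]
  have h0 := key m₁ m₂ hm₁0 hm₂0 m hmrect hmoff ∅
  simp only [Finset.image_empty] at h0
  congr 2
end

section
/- The belief function is the minimum over compatible probability distributions: for a basic belief assignment m on finite Ω, let 𝒫_Bel be the set of probability distributions obtained by distributing, for each C, a mass m(C) over the elements of C (i.e., P(A) = Σ_C Σ_{ω∈A∩C} λ_C(ω) m(C) where each λ_C is a probability distribution on C). Then Bel(A) = min { P(A) : P ∈ 𝒫_Bel } for every A ⊆ Ω. -/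
open Finset

theorem belief_as_min_over_compatible_probs {Ω : Type*} [Fintype Ω] [DecidableEq Ω]
    (m : Finset Ω → ℝ) (hm0 : m ∅ = 0) (hmnn : ∀ C, 0 ≤ m C)
    (hmsum : ∑ C : Finset Ω, m C = 1)
    (Bel : Finset Ω → ℝ) (hBel : ∀ A, Bel A = ∑ C ∈ A.powerset, m C) :
    ∀ A : Finset Ω,
      (∀ lam : Finset Ω → Ω → ℝ,
        (∀ C ω, 0 ≤ lam C ω) → (∀ C : Finset Ω, ∀ ω ∉ C, lam C ω = 0) →
        (∀ C : Finset Ω, C.Nonempty → ∑ ω ∈ C, lam C ω = 1) →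
        Bel A ≤ ∑ C : Finset Ω, m C * ∑ ω ∈ A ∩ C, lam C ω) ∧
      (∃ lam : Finset Ω → Ω → ℝ,
        (∀ C ω, 0 ≤ lam C ω) ∧ (∀ C : Finset Ω, ∀ ω ∉ C, lam C ω = 0) ∧
        (∀ C : Finset Ω, C.Nonempty → ∑ ω ∈ C, lam C ω = 1) ∧
        ∑ C : Finset Ω, m C * ∑ ω ∈ A ∩ C, lam C ω = Bel A) := by
  intro A
  constructor
  · intro lam hnn hsupp hsum
    rw [hBel]
    have h1 : ∑ C ∈ A.powerset, m C = ∑ C ∈ A.powerset, m C * ∑ ω ∈ A ∩ C, lam C ω := by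
      refine Finset.sum_congr rfl fun C hC => ?_
      rw [Finset.mem_powerset] at hC
      rcases C.eq_empty_or_nonempty with h | h
      · simp [h, hm0]
      · rw [Finset.inter_eq_right.mpr hC, hsum C h, mul_one]
    rw [h1]
    refine Finset.sum_le_sum_of_subset_of_nonneg (Finset.subset_univ _) fun C _ _ => ?_
    exact mul_nonneg (hmnn C) (Finset.sum_nonneg fun ω _ => hnn C ω)
  · classical
    set lam : Finset Ω → Ω → ℝ := fun C ω =>
      if h : (C \ A).Nonempty then (if ω = h.choose then 1 else 0)
      else if h2 : C.Nonempty then (if ω = h2.choose then 1 else 0) else 0 with hlam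
    have hind : ∀ (s : Finset Ω) (b : Ω), b ∈ s →
        (∑ x ∈ s, if x = b then (1:ℝ) else 0) = 1 := by
      intro s b hb
      rw [Finset.sum_ite_eq' s b (fun _ => (1:ℝ)), if_pos hb]
    refine ⟨lam, ?_, ?_, ?_, ?_⟩
    · intro C ω
      simp only [hlam]
      split_ifs <;> norm_num
    · intro C ω hω
      simp only [hlam]
      by_cases h : (C \ A).Nonempty
      · rw [dif_pos h, if_neg]
        rintro rfl
        exact hω (Finset.mem_sdiff.mp h.choose_spec).1
      · rw [dif_neg h]
        by_cases h2 : C.Nonempty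
        · rw [dif_pos h2, if_neg]
          rintro rfl
          exact hω h2.choose_spec
        · rw [dif_neg h2]
    · intro C hC
      simp only [hlam]
      by_cases h : (C \ A).Nonempty
      · simp only [dif_pos h]
        exact hind C h.choose (Finset.mem_sdiff.mp h.choose_spec).1
      · simp only [dif_neg h, dif_pos hC]
        exact hind C hC.choose hC.choose_spec
    · have key : ∀ C : Finset Ω, m C * ∑ ω ∈ A ∩ C, lam C ω =
          if C ∈ A.powerset then m C else 0 := by
        intro C
        simp only [hlam, Finset.mem_powerset]
        by_cases hCA : C ⊆ A
        · rw [if_pos hCA]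
          rcases C.eq_empty_or_nonempty with h | h
          · simp [h, hm0]
          · have hempty : ¬ (C \ A).Nonempty := by
              rw [Finset.sdiff_eq_empty_iff_subset.mpr hCA]
              exact Finset.not_nonempty_empty
            rw [Finset.inter_eq_right.mpr hCA]
            simp only [dif_neg hempty, dif_pos h]
            rw [hind C h.choose h.choose_spec, mul_one]
        · rw [if_neg hCA]
          have hne : (C \ A).Nonempty := by
            rw [Finset.sdiff_nonempty]; exact hCA
          simp only [dif_pos hne]
          have : ∀ ω ∈ A ∩ C, (if ω = hne.choose then (1:ℝ) else 0) = 0 := by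
            intro ω hω
            rw [if_neg]
            rintro rfl
            exact (Finset.mem_sdiff.mp hne.choose_spec).2 (Finset.mem_inter.mp hω).1
          rw [Finset.sum_congr rfl this]
          simp
      rw [hBel]
      calc ∑ C : Finset Ω, m C * ∑ ω ∈ A ∩ C, lam C ω
          = ∑ C : Finset Ω, if C ∈ A.powerset then m C else 0 :=
            Finset.sum_congr rfl fun C _ => key C
        _ = ∑ C ∈ A.powerset, m C := by
            rw [Finset.sum_ite_mem, Finset.univ_inter]
end

section
/- Conditional belief as constrained infimum: for H ⊆ Ω with Bel(Hᶜ) ≠ 1, Bel_H(A) = inf { P(A|H) : P ∈ 𝒫_Bel and P(Hᶜ) = Bel(Hᶜ) } for all A ⊆ Ω. -/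
open Finset

theorem conditional_belief_as_constrained_inf {Ω : Type*} [Fintype Ω] [DecidableEq Ω]
    (m : Finset Ω → ℝ) (hm0 : m ∅ = 0) (hmnn : ∀ C, 0 ≤ m C)
    (hmsum : ∑ C : Finset Ω, m C = 1)
    (Bel : Finset Ω → ℝ) (hBel : ∀ A, Bel A = ∑ C ∈ A.powerset, m C)
    (H : Finset Ω) (hH : Bel Hᶜ ≠ 1) :
    ∀ A : Finset Ω,
      (Bel (A ∪ Hᶜ) - Bel Hᶜ) / (1 - Bel Hᶜ) =
      sInf { x : ℝ | ∃ lam : Finset Ω → Ω → ℝ,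
        (∀ C ω, 0 ≤ lam C ω) ∧ (∀ C : Finset Ω, ∀ ω ∉ C, lam C ω = 0) ∧
        (∀ C : Finset Ω, C.Nonempty → ∑ ω ∈ C, lam C ω = 1) ∧
        (∑ C : Finset Ω, m C * ∑ ω ∈ Hᶜ ∩ C, lam C ω) = Bel Hᶜ ∧
        x = (∑ C : Finset Ω, m C * ∑ ω ∈ (A ∩ H) ∩ C, lam C ω) /
            (∑ C : Finset Ω, m C * ∑ ω ∈ H ∩ C, lam C ω) } := by
  classical
  -- basic facts
  have hΩ : Nonempty Ω := by
    by_contra h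
    have hall : ∀ C : Finset Ω, C = ∅ := fun C =>
      Finset.eq_empty_of_forall_notMem (fun x _ => h ⟨x⟩)
    have h1 : (1:ℝ) = 0 := by
      rw [← hmsum]
      exact Finset.sum_eq_zero fun C _ => by rw [hall C, hm0]
    norm_num at h1
  have hpow : ∀ B : Finset Ω, (B.powerset : Finset (Finset Ω)) =
      univ.filter (fun C => C ⊆ B) := by
    intro B; ext C; simp
  have hBelsum : ∀ B : Finset Ω, Bel B = ∑ C : Finset Ω, if C ⊆ B then m C else 0 := by
    intro B; rw [hBel, hpow, Finset.sum_filter]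
  have hHc : ∀ C : Finset Ω, C ⊆ Hᶜ ↔ ¬(C ∩ H).Nonempty := by
    intro C
    rw [Finset.not_nonempty_iff_eq_empty, Finset.eq_empty_iff_forall_notMem]
    simp only [Finset.subset_iff, Finset.mem_inter, Finset.mem_compl]
    tauto
  have hbval : Bel Hᶜ = ∑ C : Finset Ω, if ¬(C ∩ H).Nonempty then m C else 0 := by
    rw [hBelsum]
    refine Finset.sum_congr rfl fun C _ => ?_
    by_cases h : (C ∩ H).Nonempty <;> simp [hHc C, h]
  have hBelle : Bel Hᶜ ≤ 1 := by
    rw [hBel, ← hmsum]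
    exact Finset.sum_le_sum_of_subset_of_nonneg (Finset.subset_univ _) (fun C _ _ => hmnn C)
  have hb1 : 0 < 1 - Bel Hᶜ := lt_of_le_of_ne (by linarith) (by
    intro h; exact hH (by linarith [h.symm]))
  have hDval : (1 : ℝ) - Bel Hᶜ = ∑ C : Finset Ω, if (C ∩ H).Nonempty then m C else 0 := by
    have hsplit := Finset.sum_filter_add_sum_filter_not (Finset.univ : Finset (Finset Ω))
      (fun C => (C ∩ H).Nonempty) m
    rw [Finset.sum_filter, Finset.sum_filter] at hsplit
    rw [hbval]
    linarith [hsplit, hmsum]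
  intro A
  have hsubA : ∀ C : Finset Ω, C ⊆ A ∪ Hᶜ ↔ C ∩ H ⊆ A := by
    intro C
    simp only [Finset.subset_iff, Finset.mem_inter, Finset.mem_union, Finset.mem_compl]
    constructor
    · intro h a ⟨haC, haH⟩
      rcases h haC with h' | h'
      · exact h'
      · exact absurd haH h'
    · intro h a haC
      by_cases haH : a ∈ H
      · exact Or.inl (h ⟨haC, haH⟩)
      · exact Or.inr haH
  have hNval : Bel (A ∪ Hᶜ) - Bel Hᶜ =
      ∑ C : Finset Ω, if (C ∩ H).Nonempty ∧ C ∩ H ⊆ A then m C else 0 := by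
    rw [hBelsum, hbval, ← Finset.sum_sub_distrib]
    refine Finset.sum_congr rfl fun C _ => ?_
    by_cases h1 : (C ∩ H).Nonempty
    · by_cases h2 : C ∩ H ⊆ A <;> simp [hsubA C, h1, h2]
    · have h2 : C ∩ H ⊆ A := by
        rw [Finset.not_nonempty_iff_eq_empty] at h1
        rw [h1]; exact Finset.empty_subset A
      simp [hsubA C, h1, h2]
  -- the witness lam
  let pick : Finset Ω → Ω := fun C =>
    if h : ((C ∩ H) \ A).Nonempty then h.choose
    else if h2 : (C ∩ H).Nonempty then h2.choose
    else if h3 : C.Nonempty then h3.choose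
    else Classical.arbitrary Ω
  have hpickC : ∀ C : Finset Ω, C.Nonempty → pick C ∈ C := by
    intro C hC
    unfold pick
    beta_reduce
    split_ifs with h1 h2
    · have := h1.choose_spec
      simp only [Finset.mem_sdiff, Finset.mem_inter] at this
      exact this.1.1
    · have := h2.choose_spec
      simp only [Finset.mem_inter] at this
      exact this.1
    · exact hC.choose_spec
  have hpickH : ∀ C : Finset Ω, C.Nonempty → (pick C ∈ H ↔ (C ∩ H).Nonempty) := by
    intro C hC
    unfold pick
    beta_reduce
    split_ifs with h1 h2
    · have hs := h1.choose_spec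
      simp only [Finset.mem_sdiff, Finset.mem_inter] at hs
      have hne : (C ∩ H).Nonempty := ⟨h1.choose, Finset.mem_inter.mpr ⟨hs.1.1, hs.1.2⟩⟩
      simp [hs.1.2, hne]
    · have hs := h2.choose_spec
      simp only [Finset.mem_inter] at hs
      simp [hs.2, h2]
    · constructor
      · intro hmem
        exact absurd ⟨hC.choose, Finset.mem_inter.mpr ⟨hC.choose_spec, hmem⟩⟩ h2
      · intro h; exact absurd h h2
  have hpickAH : ∀ C : Finset Ω, C.Nonempty →
      (pick C ∈ A ∩ H ↔ ((C ∩ H).Nonempty ∧ C ∩ H ⊆ A)) := by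
    intro C hC
    unfold pick
    beta_reduce
    split_ifs with h1 h2
    · have hs := h1.choose_spec
      simp only [Finset.mem_sdiff, Finset.mem_inter] at hs
      have hns : ¬(C ∩ H ⊆ A) := fun hsub =>
        hs.2 (hsub (Finset.mem_inter.mpr ⟨hs.1.1, hs.1.2⟩))
      simp [Finset.mem_inter, hs.2, hns]
    · have hs := h2.choose_spec
      have hsub : C ∩ H ⊆ A := by
        intro a ha
        by_contra hna
        exact h1 ⟨a, Finset.mem_sdiff.mpr ⟨ha, hna⟩⟩
      have hmem : h2.choose ∈ A := hsub hs
      simp only [Finset.mem_inter] at hs ⊢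
      simp [hmem, hs.2, h2, hsub]
    · simp only [Finset.mem_inter]
      constructor
      · intro ⟨_, hmem⟩
        exact absurd ⟨hC.choose, Finset.mem_inter.mpr ⟨hC.choose_spec, hmem⟩⟩ h2
      · intro ⟨h, _⟩; exact absurd h h2
  set lam0 : Finset Ω → Ω → ℝ := fun C ω => if C.Nonempty ∧ ω = pick C then 1 else 0 with hlam0
  have hsumS : ∀ (S C : Finset Ω), C.Nonempty →
      ∑ ω ∈ S ∩ C, lam0 C ω = if pick C ∈ S then 1 else 0 := by
    intro S C hC
    have : ∀ ω, lam0 C ω = if ω = pick C then 1 else 0 := by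
      intro ω; simp only [hlam0, hC, true_and]
    simp_rw [this]
    rw [Finset.sum_ite_eq' (S ∩ C) (pick C) (fun _ => (1:ℝ))]
    by_cases h : pick C ∈ S
    · simp [Finset.mem_inter, h, hpickC C hC]
    · simp [Finset.mem_inter, h]
  have hsum_formula : ∀ S : Finset Ω,
      ∑ C : Finset Ω, m C * ∑ ω ∈ S ∩ C, lam0 C ω =
      ∑ C : Finset Ω, if C.Nonempty ∧ pick C ∈ S then m C else 0 := by
    intro S
    refine Finset.sum_congr rfl fun C _ => ?_
    by_cases hC : C.Nonempty
    · rw [hsumS S C hC]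
      by_cases h : pick C ∈ S <;> simp [hC, h]
    · rw [Finset.not_nonempty_iff_eq_empty] at hC
      subst hC
      simp
  -- the value of the three sums for the witness
  have hwHc : ∑ C : Finset Ω, m C * ∑ ω ∈ Hᶜ ∩ C, lam0 C ω = Bel Hᶜ := by
    rw [hsum_formula, hbval]
    refine Finset.sum_congr rfl fun C _ => ?_
    by_cases hC : C.Nonempty
    · have hiff := hpickH C hC
      by_cases h : (C ∩ H).Nonempty
      · have hn : pick C ∉ Hᶜ := by
          rw [Finset.mem_compl, not_not]
          exact hiff.mpr h
        simp [hC, hn, h]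
      · have hy : pick C ∈ Hᶜ := Finset.mem_compl.mpr (fun hp => h (hiff.mp hp))
        simp [hC, hy, h]
    · rw [Finset.not_nonempty_iff_eq_empty] at hC
      subst hC
      simp [hm0]
  have hwH : ∑ C : Finset Ω, m C * ∑ ω ∈ H ∩ C, lam0 C ω = 1 - Bel Hᶜ := by
    rw [hsum_formula, hDval]
    refine Finset.sum_congr rfl fun C _ => ?_
    by_cases hC : C.Nonempty
    · have hiff := hpickH C hC
      by_cases h : (C ∩ H).Nonempty
      · simp [hC, hiff.mpr h, h]
      · have hn : pick C ∉ H := fun hp => h (hiff.mp hp)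
        simp [hC, hn, h]
    · rw [Finset.not_nonempty_iff_eq_empty] at hC
      subst hC
      have : ¬((∅ : Finset Ω) ∩ H).Nonempty := by simp
      simp [this]
  have hwAH : ∑ C : Finset Ω, m C * ∑ ω ∈ (A ∩ H) ∩ C, lam0 C ω = Bel (A ∪ Hᶜ) - Bel Hᶜ := by
    rw [hsum_formula, hNval]
    refine Finset.sum_congr rfl fun C _ => ?_
    by_cases hC : C.Nonempty
    · have hiff := hpickAH C hC
      by_cases h : (C ∩ H).Nonempty ∧ C ∩ H ⊆ A
      · simp [hC, hiff.mpr h, h]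
      · have hn : pick C ∉ A ∩ H := fun hp => h (hiff.mp hp)
        by_cases h1 : (C ∩ H).Nonempty <;> by_cases h2 : C ∩ H ⊆ A <;>
          simp [hC, hn, h1, h2] <;> tauto
    · rw [Finset.not_nonempty_iff_eq_empty] at hC
      subst hC
      have : ¬((∅ : Finset Ω) ∩ H).Nonempty := by simp
      simp [this]
  -- membership of the target value in the set
  have hmem : (Bel (A ∪ Hᶜ) - Bel Hᶜ) / (1 - Bel Hᶜ) ∈
      { x : ℝ | ∃ lam : Finset Ω → Ω → ℝ,
        (∀ C ω, 0 ≤ lam C ω) ∧ (∀ C : Finset Ω, ∀ ω ∉ C, lam C ω = 0) ∧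
        (∀ C : Finset Ω, C.Nonempty → ∑ ω ∈ C, lam C ω = 1) ∧
        (∑ C : Finset Ω, m C * ∑ ω ∈ Hᶜ ∩ C, lam C ω) = Bel Hᶜ ∧
        x = (∑ C : Finset Ω, m C * ∑ ω ∈ (A ∩ H) ∩ C, lam C ω) /
            (∑ C : Finset Ω, m C * ∑ ω ∈ H ∩ C, lam C ω) } := by
    refine ⟨lam0, ?_, ?_, ?_, hwHc, ?_⟩
    · intro C ω
      simp only [hlam0]
      split_ifs <;> norm_num
    · intro C ω hω
      simp only [hlam0]
      rw [if_neg]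
      rintro ⟨hC, rfl⟩
      exact hω (hpickC C hC)
    · intro C hC
      have h := hsumS C C hC
      rw [Finset.inter_self] at h
      rw [h, if_pos (hpickC C hC)]
    · rw [hwAH, hwH]
  -- lower bound
  have hlb : ∀ x ∈ { x : ℝ | ∃ lam : Finset Ω → Ω → ℝ,
        (∀ C ω, 0 ≤ lam C ω) ∧ (∀ C : Finset Ω, ∀ ω ∉ C, lam C ω = 0) ∧
        (∀ C : Finset Ω, C.Nonempty → ∑ ω ∈ C, lam C ω = 1) ∧
        (∑ C : Finset Ω, m C * ∑ ω ∈ Hᶜ ∩ C, lam C ω) = Bel Hᶜ ∧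
        x = (∑ C : Finset Ω, m C * ∑ ω ∈ (A ∩ H) ∩ C, lam C ω) /
            (∑ C : Finset Ω, m C * ∑ ω ∈ H ∩ C, lam C ω) },
      (Bel (A ∪ Hᶜ) - Bel Hᶜ) / (1 - Bel Hᶜ) ≤ x := by
    rintro x ⟨lam, hnn, hzero, hone, hcon, hx⟩
    -- split of the unit mass of each nonempty C
    have hsplitC : ∀ C : Finset Ω, C.Nonempty →
        (∑ ω ∈ Hᶜ ∩ C, lam C ω) + (∑ ω ∈ H ∩ C, lam C ω) = 1 := by
      intro C hC
      rw [← Finset.sum_union (by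
        simp only [Finset.disjoint_left, Finset.mem_inter, Finset.mem_compl]
        rintro a ⟨ha1, _⟩ ⟨ha2, _⟩
        exact ha1 ha2)]
      have : (Hᶜ ∩ C) ∪ (H ∩ C) = C := by
        ext a
        simp only [Finset.mem_union, Finset.mem_inter, Finset.mem_compl]
        by_cases h : a ∈ H <;> by_cases h' : a ∈ C <;> simp [h, h']
      rw [this, hone C hC]
    have hsnn : ∀ C : Finset Ω, ∀ S : Finset Ω, 0 ≤ ∑ ω ∈ S ∩ C, lam C ω :=
      fun C S => Finset.sum_nonneg fun ω _ => hnn C ω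
    -- denominator equals 1 - Bel Hᶜ
    have hden : ∑ C : Finset Ω, m C * ∑ ω ∈ H ∩ C, lam C ω = 1 - Bel Hᶜ := by
      have h1 : ∑ C : Finset Ω, (m C * ∑ ω ∈ Hᶜ ∩ C, lam C ω
          + m C * ∑ ω ∈ H ∩ C, lam C ω) = 1 := by
        rw [← hmsum]
        refine Finset.sum_congr rfl fun C _ => ?_
        by_cases hC : C.Nonempty
        · rw [← mul_add, hsplitC C hC, mul_one]
        · rw [Finset.not_nonempty_iff_eq_empty] at hC
          subst hC
          simp [hm0]
      rw [Finset.sum_add_distrib] at h1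
      rw [hcon] at h1
      linarith
    -- mass escaping to Hᶜ is zero for sets meeting H
    have hescape : ∀ C : Finset Ω, (C ∩ H).Nonempty →
        m C * ∑ ω ∈ Hᶜ ∩ C, lam C ω = 0 := by
      have hsplit : ∑ C : Finset Ω, m C * ∑ ω ∈ Hᶜ ∩ C, lam C ω =
          (∑ C ∈ univ.filter (fun C : Finset Ω => (C ∩ H).Nonempty),
            m C * ∑ ω ∈ Hᶜ ∩ C, lam C ω)
          + ∑ C ∈ univ.filter (fun C : Finset Ω => ¬(C ∩ H).Nonempty),
            m C * ∑ ω ∈ Hᶜ ∩ C, lam C ω :=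
        (Finset.sum_filter_add_sum_filter_not _ _ _).symm
      have hrest : ∑ C ∈ univ.filter (fun C : Finset Ω => ¬(C ∩ H).Nonempty),
          m C * ∑ ω ∈ Hᶜ ∩ C, lam C ω = Bel Hᶜ := by
        rw [hbval, Finset.sum_filter]
        refine Finset.sum_congr rfl fun C _ => ?_
        by_cases h : (C ∩ H).Nonempty
        · simp [h]
        · by_cases hC : C.Nonempty
          · have hCsub : C ⊆ Hᶜ := (hHc C).mpr h
            have : Hᶜ ∩ C = C := Finset.inter_eq_right.mpr hCsub
            simp [h, this, hone C hC]
          · rw [Finset.not_nonempty_iff_eq_empty] at hC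
            subst hC
            simp [hm0]
      have hzero' : ∑ C ∈ univ.filter (fun C : Finset Ω => (C ∩ H).Nonempty),
          m C * ∑ ω ∈ Hᶜ ∩ C, lam C ω = 0 := by
        rw [hsplit, hrest] at hcon
        linarith
      intro C hCH
      have hmemf : C ∈ univ.filter (fun C : Finset Ω => (C ∩ H).Nonempty) := by
        simp [hCH]
      have := (Finset.sum_eq_zero_iff_of_nonneg (fun D _ =>
        mul_nonneg (hmnn D) (hsnn D Hᶜ))).mp hzero' C hmemf
      exact this
    -- numerator lower bound
    have hnum : Bel (A ∪ Hᶜ) - Bel Hᶜ ≤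
        ∑ C : Finset Ω, m C * ∑ ω ∈ (A ∩ H) ∩ C, lam C ω := by
      rw [hNval]
      refine Finset.sum_le_sum fun C _ => ?_
      by_cases h : (C ∩ H).Nonempty ∧ C ∩ H ⊆ A
      · rw [if_pos h]
        have hC : C.Nonempty := by
          obtain ⟨a, ha⟩ := h.1
          exact ⟨a, (Finset.mem_inter.mp ha).1⟩
        have heq : (A ∩ H) ∩ C = H ∩ C := by
          ext a
          simp only [Finset.mem_inter]
          constructor
          · rintro ⟨⟨_, haH⟩, haC⟩; exact ⟨haH, haC⟩
          · rintro ⟨haH, haC⟩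
            exact ⟨⟨h.2 (Finset.mem_inter.mpr ⟨haC, haH⟩), haH⟩, haC⟩
        rw [heq]
        have hsum : (∑ ω ∈ Hᶜ ∩ C, lam C ω) + (∑ ω ∈ H ∩ C, lam C ω) = 1 :=
          hsplitC C hC
        have hesc := hescape C h.1
        calc m C = m C * ((∑ ω ∈ Hᶜ ∩ C, lam C ω) + (∑ ω ∈ H ∩ C, lam C ω)) := by
              rw [hsum, mul_one]
          _ = m C * (∑ ω ∈ Hᶜ ∩ C, lam C ω) + m C * (∑ ω ∈ H ∩ C, lam C ω) := by ring
          _ = m C * (∑ ω ∈ H ∩ C, lam C ω) := by rw [hesc]; ring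
          _ ≤ m C * (∑ ω ∈ H ∩ C, lam C ω) := le_refl _
      · rw [if_neg h]
        exact mul_nonneg (hmnn C) (hsnn C (A ∩ H))
    rw [hx, hden]
    exact div_le_div_of_nonneg_right hnum hb1.le |>.trans_eq rfl
  -- conclude
  refine le_antisymm ?_ ?_
  · exact le_csInf ⟨_, hmem⟩ hlb
  · exact csInf_le ⟨_, hlb⟩ hmem
end

section
/- Weak law of large numbers for belief functions: let m be a basic belief assignment on finite Ω, X : Ω → ℝ, and define the expectation 𝔼(X) = Σ_C m(C)·min_{ω∈C} X(ω). Let m_n on Ω^n be the product assignment m_n(A₁ × ⋯ × A_n) = Π m(A_j) with belief function Bel_n, and X_j the j-th coordinate evaluation. Then for every ε > 0: Bel_n( (1/n) Σ_{j=1}^n X_j ≥ 𝔼(X) − ε ) → 1 and Bel_n( (1/n) Σ_{j=1}^n X_j ≥ 𝔼(X) + ε ) → 0 as n → ∞. -/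
open Finset Filter

lemma sum_cons_aux {α : Type*} [Fintype α] (n : ℕ) (F : (Fin (n+1) → α) → ℝ) :
    ∑ a : Fin (n+1) → α, F a = ∑ x : α, ∑ b : Fin n → α, F ((Fin.cons x b : Fin (n+1) → α)) := by
  rw [← (Fin.consEquiv (fun _ => α)).sum_comp F, Fintype.sum_prod_type]
  rfl

lemma total_aux {α : Type*} [Fintype α] (p : α → ℝ) (hp1 : ∑ x, p x = 1) :
    ∀ n : ℕ, ∑ a : Fin n → α, ∏ i, p (a i) = 1 := by
  intro n
  induction n with
  | zero => simp
  | succ n ih =>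
    rw [sum_cons_aux]
    have : ∀ (x : α) (b : Fin n → α), ∏ i, p ((Fin.cons x b : Fin (n+1) → α) i) = p x * ∏ i, p (b i) := by
      intro x b
      rw [Fin.prod_univ_succ]
      simp
    simp_rw [this, ← Finset.mul_sum, ih, mul_one, hp1]

lemma moment1_aux {α : Type*} [Fintype α] (p g : α → ℝ) (hp1 : ∑ x, p x = 1)
    (hpg : ∑ x, p x * g x = 0) :
    ∀ n : ℕ, ∑ a : Fin n → α, (∏ i, p (a i)) * (∑ j, g (a j)) = 0 := by
  intro n
  induction n with
  | zero => simp
  | succ n ih =>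
    rw [sum_cons_aux]
    have : ∀ (x : α) (b : Fin n → α),
        (∏ i, p ((Fin.cons x b : Fin (n+1) → α) i)) * (∑ j, g ((Fin.cons x b : Fin (n+1) → α) j)) =
          (p x * g x) * (∏ i, p (b i)) + p x * ((∏ i, p (b i)) * (∑ j, g (b j))) := by
      intro x b
      rw [Fin.prod_univ_succ, Fin.sum_univ_succ]
      simp only [Fin.cons_zero, Fin.cons_succ]
      ring
    simp_rw [this, Finset.sum_add_distrib, ← Finset.mul_sum, total_aux p hp1 n, ih, mul_one,
      mul_zero, Finset.sum_const_zero, add_zero, hpg]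

lemma moment2_aux {α : Type*} [Fintype α] (p g : α → ℝ) (hp1 : ∑ x, p x = 1)
    (hpg : ∑ x, p x * g x = 0) :
    ∀ n : ℕ, ∑ a : Fin n → α, (∏ i, p (a i)) * (∑ j, g (a j))^2
      = n * ∑ x, p x * (g x)^2 := by
  intro n
  induction n with
  | zero => simp
  | succ n ih =>
    rw [sum_cons_aux]
    have key : ∀ x : α,
        ∑ b : Fin n → α, (∏ i, p ((Fin.cons x b : Fin (n+1) → α) i)) *
          (∑ j, g ((Fin.cons x b : Fin (n+1) → α) j))^2 =
          p x * (g x)^2 + p x * (n * ∑ y, p y * (g y)^2) := by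
      intro x
      have expand : ∀ b : Fin n → α,
          (∏ i, p ((Fin.cons x b : Fin (n+1) → α) i)) *
            (∑ j, g ((Fin.cons x b : Fin (n+1) → α) j))^2 =
            (p x * (g x)^2) * (∏ i, p (b i))
            + (2 * g x) * (p x * ((∏ i, p (b i)) * (∑ j, g (b j))))
            + p x * ((∏ i, p (b i)) * (∑ j, g (b j))^2) := by
        intro b
        rw [Fin.prod_univ_succ, Fin.sum_univ_succ]
        simp only [Fin.cons_zero, Fin.cons_succ]
        ring
      simp_rw [expand]
      rw [Finset.sum_add_distrib, Finset.sum_add_distrib]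
      simp_rw [← Finset.mul_sum]
      rw [total_aux p hp1 n, moment1_aux p g hp1 hpg n, ih]
      ring
    simp_rw [key]
    rw [Finset.sum_add_distrib, ← Finset.sum_mul, hp1]
    push_cast
    ring

lemma cheb_aux {ι : Type*} [Fintype ι] (w f : ι → ℝ) (hw : ∀ i, 0 ≤ w i) (c : ℝ) (hc : 0 < c)
    (P : ι → Prop) [DecidablePred P] (hP : ∀ i, P i → c^2 ≤ (f i)^2) :
    ∑ i ∈ univ.filter P, w i ≤ (∑ i, w i * (f i)^2) / c^2 := by
  rw [le_div_iff₀ (by positivity)]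
  calc (∑ i ∈ univ.filter P, w i) * c^2 = ∑ i ∈ univ.filter P, w i * c^2 := Finset.sum_mul ..
    _ ≤ ∑ i ∈ univ.filter P, w i * (f i)^2 := by
        refine Finset.sum_le_sum fun i hi => ?_
        exact mul_le_mul_of_nonneg_left (hP i (Finset.mem_filter.mp hi).2) (hw i)
    _ ≤ ∑ i, w i * (f i)^2 := by
        refine Finset.sum_le_sum_of_subset_of_nonneg (Finset.filter_subset _ _) ?_
        intro i _ _
        have := hw i
        positivity


lemma beln_key {Ω : Type*} [Fintype Ω] [DecidableEq Ω]
    (m : Finset Ω → ℝ) (hm0 : m ∅ = 0) (X : Ω → ℝ)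
    (mn : ∀ n : ℕ, Finset (Fin n → Ω) → ℝ)
    (hmn : ∀ (n : ℕ) (A : Fin n → Finset Ω),
      mn n (Fintype.piFinset A) = ∏ j, m (A j))
    (hmnoff : ∀ (n : ℕ) (S : Finset (Fin n → Ω)),
      (¬ ∃ A : Fin n → Finset Ω, S = Fintype.piFinset A) → mn n S = 0)
    (Beln : ∀ n : ℕ, Finset (Fin n → Ω) → ℝ)
    (hBeln : ∀ (n : ℕ) (A : Finset (Fin n → Ω)), Beln n A = ∑ S ∈ A.powerset, mn n S)
    (n : ℕ) (hn : 0 < n) (t : ℝ) :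
    Beln n (univ.filter (fun ω : Fin n → Ω => t ≤ (∑ j, X (ω j)) / n)) =
      ∑ a ∈ univ.filter (fun a : Fin n → Finset Ω =>
        (n : ℝ) * t ≤ ∑ j, (if h : (a j).Nonempty then (a j).inf' h X else 0)),
        ∏ j, m (a j) := by
  have hn' : (0 : ℝ) < n := by exact_mod_cast hn
  set Y : Finset Ω → ℝ := fun C => if h : C.Nonempty then C.inf' h X else 0 with hY
  set ev : Finset (Fin n → Ω) := univ.filter (fun ω : Fin n → Ω => t ≤ (∑ j, X (ω j)) / n)
    with hev
  set T : Finset (Fin n → Finset Ω) := univ.filter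
    (fun a : Fin n → Finset Ω => (∀ j, (a j).Nonempty) ∧ (n : ℝ) * t ≤ ∑ j, Y (a j)) with hT
  -- membership in ev
  have hev_mem : ∀ ω : Fin n → Ω, ω ∈ ev ↔ (n : ℝ) * t ≤ ∑ j, X (ω j) := by
    intro ω
    rw [hev, Finset.mem_filter]
    simp only [Finset.mem_univ, true_and]
    rw [le_div_iff₀ hn', mul_comm]
  -- image of T is inside powerset of ev
  have himsub : T.image Fintype.piFinset ⊆ ev.powerset := by
    intro S hS
    rcases Finset.mem_image.mp hS with ⟨a, ha, rfl⟩
    rcases Finset.mem_filter.mp ha with ⟨-, hne, hsum⟩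
    rw [Finset.mem_powerset]
    intro ω hω
    rw [Fintype.mem_piFinset] at hω
    rw [hev_mem]
    refine le_trans hsum (Finset.sum_le_sum fun j _ => ?_)
    rw [hY]
    simp only [dif_pos (hne j)]
    exact Finset.inf'_le X (hω j)
  -- zero off the image
  have hzero : ∀ S ∈ ev.powerset, S ∉ T.image Fintype.piFinset → mn n S = 0 := by
    intro S hS hSim
    by_cases hA : ∃ A : Fin n → Finset Ω, S = Fintype.piFinset A
    · rcases hA with ⟨A, rfl⟩
      rw [hmn]
      by_cases hne : ∀ j, (A j).Nonempty
      · exfalso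
        apply hSim
        refine Finset.mem_image.mpr ⟨A, ?_, rfl⟩
        rw [hT, Finset.mem_filter]
        refine ⟨Finset.mem_univ _, hne, ?_⟩
        -- construct the argmin tuple
        have hch : ∀ j : Fin n, ∃ x, x ∈ A j ∧ (A j).inf' (hne j) X = X x := fun j =>
          Finset.exists_mem_eq_inf' (hne j) X
        choose ω hω₁ hω₂ using hch
        have hωev : ω ∈ ev := Finset.mem_powerset.mp hS (Fintype.mem_piFinset.mpr hω₁)
        have := (hev_mem ω).mp hωev
        refine le_trans this (le_of_eq ?_)
        refine Finset.sum_congr rfl fun j _ => ?_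
        rw [hY]
        simp only [dif_pos (hne j)]
        exact (hω₂ j).symm
      · push_neg at hne
        rcases hne with ⟨j, hj⟩
        refine Finset.prod_eq_zero (Finset.mem_univ j) ?_
        rw [hj, hm0]
    · exact hmnoff n S hA
  -- injectivity on T
  have hinj : ∀ a ∈ T, ∀ b ∈ T, Fintype.piFinset a = Fintype.piFinset b → a = b := by
    intro a ha b hb hab
    rcases Finset.mem_filter.mp ha with ⟨-, hnea, -⟩
    rcases Finset.mem_filter.mp hb with ⟨-, hneb, -⟩
    funext j
    rw [← Fintype.eval_image_piFinset a j (fun k _ => hnea k), hab,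
      Fintype.eval_image_piFinset b j (fun k _ => hneb k)]
  rw [hBeln, ← Finset.sum_subset himsub hzero, Finset.sum_image hinj]
  simp_rw [hmn]
  refine Finset.sum_subset ?_ ?_
  · intro a ha
    rcases Finset.mem_filter.mp ha with ⟨-, -, hsum⟩
    exact Finset.mem_filter.mpr ⟨Finset.mem_univ _, hsum⟩
  · intro a ha haT
    rcases Finset.mem_filter.mp ha with ⟨-, hsum⟩
    have : ¬ ∀ j, (a j).Nonempty := by
      intro h
      exact haT (Finset.mem_filter.mpr ⟨Finset.mem_univ _, h, hsum⟩)
    push_neg at this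
    rcases this with ⟨j, hj⟩
    refine Finset.prod_eq_zero (Finset.mem_univ j) ?_
    rw [hj, hm0]

theorem lln_for_belief_functions {Ω : Type*} [Fintype Ω] [DecidableEq Ω]
    (m : Finset Ω → ℝ) (hm0 : m ∅ = 0) (hmnn : ∀ C, 0 ≤ m C)
    (hmsum : ∑ C : Finset Ω, m C = 1)
    (X : Ω → ℝ)
    (E : ℝ) (hE : E = ∑ C : Finset Ω, m C * (if h : C.Nonempty then C.inf' h X else 0))
    (mn : ∀ n : ℕ, Finset (Fin n → Ω) → ℝ)
    (hmn : ∀ (n : ℕ) (A : Fin n → Finset Ω),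
      mn n (Fintype.piFinset A) = ∏ j, m (A j))
    (hmnoff : ∀ (n : ℕ) (S : Finset (Fin n → Ω)),
      (¬ ∃ A : Fin n → Finset Ω, S = Fintype.piFinset A) → mn n S = 0)
    (Beln : ∀ n : ℕ, Finset (Fin n → Ω) → ℝ)
    (hBeln : ∀ (n : ℕ) (A : Finset (Fin n → Ω)), Beln n A = ∑ S ∈ A.powerset, mn n S)
    (ε : ℝ) (hε : 0 < ε) :
    Tendsto (fun n : ℕ =>
        Beln n (univ.filter (fun ω : Fin n → Ω => E - ε ≤ (∑ j, X (ω j)) / n)))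
      atTop (nhds 1) ∧
    Tendsto (fun n : ℕ =>
        Beln n (univ.filter (fun ω : Fin n → Ω => E + ε ≤ (∑ j, X (ω j)) / n)))
      atTop (nhds 0) := by
  set Y : Finset Ω → ℝ := fun C => if h : C.Nonempty then C.inf' h X else 0 with hYdef
  set g : Finset Ω → ℝ := fun C => Y C - E with hgdef
  have hpg : ∑ C : Finset Ω, m C * g C = 0 := by
    simp only [hgdef, mul_sub]
    rw [Finset.sum_sub_distrib, ← Finset.sum_mul, hmsum, one_mul, ← hE, sub_self]
  set V : ℝ := ∑ C : Finset Ω, m C * (g C)^2 with hVdef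
  have hV : 0 ≤ V := Finset.sum_nonneg fun C _ => by have := hmnn C; positivity
  set Bnd : ℕ → ℝ := fun n => (V / ε^2) / n with hBnddef
  have hBnd : Tendsto Bnd atTop (nhds 0) := tendsto_const_div_atTop_nhds_zero_nat _
  have hprodnn : ∀ (n : ℕ) (a : Fin n → Finset Ω), 0 ≤ ∏ j, m (a j) :=
    fun n a => Finset.prod_nonneg fun j _ => hmnn (a j)
  have main : ∀ n : ℕ, 1 ≤ n →
      ((1 - Bnd n ≤ Beln n (univ.filter (fun ω : Fin n → Ω => E - ε ≤ (∑ j, X (ω j)) / n)) ∧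
        Beln n (univ.filter (fun ω : Fin n → Ω => E - ε ≤ (∑ j, X (ω j)) / n)) ≤ 1) ∧
       (0 ≤ Beln n (univ.filter (fun ω : Fin n → Ω => E + ε ≤ (∑ j, X (ω j)) / n)) ∧
        Beln n (univ.filter (fun ω : Fin n → Ω => E + ε ≤ (∑ j, X (ω j)) / n)) ≤ Bnd n)) := by
    intro n hn1
    have hn : 0 < n := hn1
    have hn' : (0 : ℝ) < n := by exact_mod_cast hn
    have hgsum : ∀ a : Fin n → Finset Ω, ∑ j, g (a j) = (∑ j, Y (a j)) - n * E := by
      intro a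
      simp only [hgdef]
      rw [Finset.sum_sub_distrib, Finset.sum_const, Finset.card_univ, Fintype.card_fin,
        nsmul_eq_mul]
    have hmom : ∑ a : Fin n → Finset Ω, (∏ i, m (a i)) * (∑ j, g (a j))^2 = n * V :=
      moment2_aux m g hmsum hpg n
    have hchebbnd : (∑ a : Fin n → Finset Ω, (∏ i, m (a i)) * (∑ j, g (a j))^2)
        / ((n : ℝ) * ε)^2 = Bnd n := by
      rw [hmom, hBnddef]
      field_simp
    constructor
    · -- lower event, t = E - ε
      rw [beln_key m hm0 X mn hmn hmnoff Beln hBeln n hn (E - ε)]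
      have hsplit : (∑ a ∈ univ.filter (fun a : Fin n → Finset Ω =>
            (n : ℝ) * (E - ε) ≤ ∑ j, (if h : (a j).Nonempty then (a j).inf' h X else 0)),
            ∏ j, m (a j))
          + (∑ a ∈ univ.filter (fun a : Fin n → Finset Ω =>
            ¬((n : ℝ) * (E - ε) ≤ ∑ j, (if h : (a j).Nonempty then (a j).inf' h X else 0))),
            ∏ j, m (a j)) = 1 := by
        rw [Finset.sum_filter_add_sum_filter_not]
        exact total_aux m hmsum n
      have htailnn : 0 ≤ ∑ a ∈ univ.filter (fun a : Fin n → Finset Ω =>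
            ¬((n : ℝ) * (E - ε) ≤ ∑ j, (if h : (a j).Nonempty then (a j).inf' h X else 0))),
            ∏ j, m (a j) :=
        Finset.sum_nonneg fun a _ => hprodnn n a
      have htail : (∑ a ∈ univ.filter (fun a : Fin n → Finset Ω =>
            ¬((n : ℝ) * (E - ε) ≤ ∑ j, (if h : (a j).Nonempty then (a j).inf' h X else 0))),
            ∏ j, m (a j)) ≤ Bnd n := by
        rw [← hchebbnd]
        refine cheb_aux (fun a : Fin n → Finset Ω => ∏ j, m (a j)) (fun a : Fin n → Finset Ω => ∑ j, g (a j)) (hprodnn n)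
          ((n : ℝ) * ε) (by positivity) _ ?_
        intro a ha
        rw [not_le] at ha
        have h1 : (n : ℝ) * ε ≤ -(∑ j, g (a j)) := by
          rw [hgsum a]
          have : ∑ j, Y (a j) = ∑ j, (if h : (a j).Nonempty then (a j).inf' h X else 0) := rfl
          rw [this]
          nlinarith
        calc ((n : ℝ) * ε)^2 ≤ (-(∑ j, g (a j)))^2 := pow_le_pow_left₀ (by positivity) h1 2
          _ = (∑ j, g (a j))^2 := neg_sq _
      constructor
      · linarith
      · linarith
    · -- upper event, t = E + ε
      rw [beln_key m hm0 X mn hmn hmnoff Beln hBeln n hn (E + ε)]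
      constructor
      · exact Finset.sum_nonneg fun a _ => hprodnn n a
      · rw [← hchebbnd]
        refine cheb_aux (fun a : Fin n → Finset Ω => ∏ j, m (a j)) (fun a : Fin n → Finset Ω => ∑ j, g (a j)) (hprodnn n)
          ((n : ℝ) * ε) (by positivity) _ ?_
        intro a ha
        have h1 : (n : ℝ) * ε ≤ ∑ j, g (a j) := by
          rw [hgsum a]
          have : ∑ j, Y (a j) = ∑ j, (if h : (a j).Nonempty then (a j).inf' h X else 0) := rfl
          rw [this]
          nlinarith
        exact pow_le_pow_left₀ (by positivity) h1 2
  constructor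
  · refine tendsto_of_tendsto_of_tendsto_of_le_of_le'
      (g := fun n => 1 - Bnd n) (h := fun _ => 1)
      (by simpa using tendsto_const_nhds.sub hBnd) tendsto_const_nhds ?_ ?_
    · filter_upwards [eventually_ge_atTop 1] with n hn
      exact ((main n hn).1).1
    · filter_upwards [eventually_ge_atTop 1] with n hn
      exact ((main n hn).1).2
  · refine squeeze_zero' ?_ ?_ hBnd
    · filter_upwards [eventually_ge_atTop 1] with n hn
      exact ((main n hn).2).1
    · filter_upwards [eventually_ge_atTop 1] with n hn
      exact ((main n hn).2).2
end
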